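/- arXiv:1801.07591 — 8 statements merged into one kernel-verified Lean document; each statement's English description precedes it below -/
import Mathlib

section
/- Let ρ and ρ_E be d×d complex density matrices, let p₀, p₁ ≥ 0 with p₀ + p₁ = 1 and p₀ ≤ p₁, and let η ∈ [0,1] satisfy η ≤ 1 − p₀/p₁ (equivalently γ := p₁(1−η) − p₀ ≥ 0). Then the matrix Ω_c := p₁η·ρ + γ·ρ_E is positive semidefinite and its trace norm equals p₁ − p₀; consequently the minimum-error probability P_err = (1 − ‖Ω_c‖₁)/2 equals p₀, for every (pure or mixed) signal state ρ. -/
open Matrix BigOperators Kronecker ComplexOrder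

/-- The trace norm of a Hermitian matrix: the sum of the absolute values of its eigenvalues. -/
noncomputable def traceNorm {n : Type*} [Fintype n] [DecidableEq n]
    {A : Matrix n n ℂ} (hA : A.IsHermitian) : ℝ :=
  ∑ i, |hA.eigenvalues i|

/-! Since `γ ≥ 0`, `Ω_c` is a nonnegative combination of density matrices, hence positive
semidefinite; its trace norm is then its trace `p₁η + γ = p₁ - p₀`. -/

theorem Matrix.PosSemidef.traceNorm_eq_re_trace {n : Type*} [Fintype n] [DecidableEq n]
    {A : Matrix n n ℂ} (hA : A.PosSemidef) (hA' : A.IsHermitian) :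
    traceNorm hA' = A.trace.re := by
  rw [hA'.trace_eq_sum_eigenvalues, Complex.re_sum]
  exact Finset.sum_congr rfl fun i _ => by
    simpa using abs_of_nonneg (hA.eigenvalues_nonneg i)

theorem Matrix.trace_smul_add_smul_of_trace_eq_one {n : Type*} [Fintype n]
    {ρ σ : Matrix n n ℂ} (hρ : ρ.trace = 1) (hσ : σ.trace = 1) (a b : ℝ) :
    (a • ρ + b • σ).trace = ((a + b : ℝ) : ℂ) := by
  rw [trace_add, trace_smul, trace_smul, hρ, hσ, Complex.real_smul, Complex.real_smul]
  push_cast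
  ring

theorem region_I_conventional_general {d : ℕ}
    (ρ ρE : Matrix (Fin d) (Fin d) ℂ)
    (hρ : ρ.PosSemidef) (hρtr : ρ.trace = 1)
    (hE : ρE.PosSemidef) (hEtr : ρE.trace = 1)
    (p₀ p₁ η : ℝ) (hp₁ : 0 ≤ p₁) (hsum : p₀ + p₁ = 1)
    (hη₀ : 0 ≤ η)
    (hγ : 0 ≤ p₁ * (1 - η) - p₀)
    (hΩ : ((p₁ * η) • ρ + (p₁ * (1 - η) - p₀) • ρE).IsHermitian) :
    ((p₁ * η) • ρ + (p₁ * (1 - η) - p₀) • ρE).PosSemidef ∧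
      traceNorm hΩ = p₁ - p₀ ∧
      (1 - traceNorm hΩ) / 2 = p₀ := by
  have hpsd : ((p₁ * η) • ρ + (p₁ * (1 - η) - p₀) • ρE).PosSemidef :=
    (hρ.smul (mul_nonneg hp₁ hη₀)).add (hE.smul hγ)
  have htn : traceNorm hΩ = p₁ - p₀ := by
    rw [hpsd.traceNorm_eq_re_trace, trace_smul_add_smul_of_trace_eq_one hρtr hEtr,
      Complex.ofReal_re]
    ring
  exact ⟨hpsd, htn, by rw [htn]; linarith⟩

/-- **Region I, conventional illumination.** If `p₀ ≤ p₁` and `γ := p₁(1-η) - p₀ ≥ 0`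
(equivalently `η ≤ 1 - p₀/p₁`), then `Ω_c = p₁η·ρ + γ·ρ_E` is positive semidefinite, its
trace norm equals `p₁ - p₀`, and the minimum-error probability `(1 - ‖Ω_c‖₁)/2` equals `p₀`,
for every (pure or mixed) signal state `ρ`. -/
theorem region_I_conventional {d : ℕ}
    (ρ ρE : Matrix (Fin d) (Fin d) ℂ)
    (hρ : ρ.PosSemidef) (hρtr : ρ.trace = 1)
    (hE : ρE.PosSemidef) (hEtr : ρE.trace = 1)
    (p₀ p₁ η : ℝ) (hp₀ : 0 ≤ p₀) (hp₁ : 0 ≤ p₁) (hsum : p₀ + p₁ = 1)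
    (hp : p₀ ≤ p₁) (hη₀ : 0 ≤ η) (hη₁ : η ≤ 1)
    (hγ : 0 ≤ p₁ * (1 - η) - p₀)
    (hΩ : ((p₁ * η) • ρ + (p₁ * (1 - η) - p₀) • ρE).IsHermitian) :
    ((p₁ * η) • ρ + (p₁ * (1 - η) - p₀) • ρE).PosSemidef ∧
      traceNorm hΩ = p₁ - p₀ ∧
      (1 - traceNorm hΩ) / 2 = p₀ :=
  region_I_conventional_general ρ ρE hρ hρtr hE hEtr p₀ p₁ η hp₁ hsum hη₀ hγ hΩ
end

section
/- Let ρ_E be a d×d complex density matrix, let ρ_AB be a d²×d² density matrix on ℂ^d ⊗ ℂ^d with reduced state ρ_B on the second factor, let p₀, p₁ ≥ 0 with p₀ + p₁ = 1 and p₀ ≤ p₁, and let η ∈ [0,1] satisfy γ := p₁(1−η) − p₀ ≥ 0. Then the matrix Ω_q := p₁η·ρ_AB + γ·(ρ_E ⊗ ρ_B) is positive semidefinite and its trace norm equals p₁ − p₀; consequently the minimum-error probability P_err = (1 − ‖Ω_q‖₁)/2 equals p₀, for every (pure or mixed) bipartite signal state ρ_AB. -/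
open Matrix BigOperators Kronecker ComplexOrder

/-!
Both summands of `Ω_q` are nonnegative multiples of positive semidefinite matrices: the partial
trace `ρ_B` is a sum of principal submatrices of `ρ_AB`. Hence `Ω_q` is positive semidefinite, so
its trace norm is its trace `p₁η + γ = p₁ - p₀`.
-/

namespace Matrix

variable {m n R : Type*} [Fintype m]

/-- Traces out the first tensor factor, leaving the reduced state on the second. -/
def partialTraceLeft [AddCommMonoid R] (M : Matrix (m × n) (m × n) R) : Matrix n n R :=
  of fun k l => ∑ i, M (i, k) (i, l)

lemma partialTraceLeft_eq_sum_submatrix [AddCommMonoid R] (M : Matrix (m × n) (m × n) R) :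
    M.partialTraceLeft = ∑ i, M.submatrix (Prod.mk i) (Prod.mk i) := by
  ext k l
  simp [partialTraceLeft, sum_apply]

lemma trace_partialTraceLeft [Fintype n] [AddCommMonoid R] (M : Matrix (m × n) (m × n) R) :
    M.partialTraceLeft.trace = M.trace := by
  simp only [trace, diag, partialTraceLeft, of_apply, Fintype.sum_prod_type]
  exact Finset.sum_comm

lemma PosSemidef.partialTraceLeft [CommRing R] [PartialOrder R] [StarRing R] [IsOrderedRing R]
    {M : Matrix (m × n) (m × n) R} (hM : M.PosSemidef) : M.partialTraceLeft.PosSemidef := by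
  rw [partialTraceLeft_eq_sum_submatrix]
  exact posSemidef_sum _ fun i _ => hM.submatrix _

end Matrix

lemma traceNorm_eq_trace {n : Type*} [Fintype n] [DecidableEq n] {A : Matrix n n ℂ}
    (hA : A.IsHermitian) (hA' : A.PosSemidef) : (traceNorm hA : ℂ) = A.trace := by
  rw [hA.trace_eq_sum_eigenvalues, traceNorm]
  push_cast
  exact Finset.sum_congr rfl fun i _ => by rw [abs_of_nonneg (hA'.eigenvalues_nonneg i)]; rfl

theorem region_I_quantum_general {d : ℕ}
    (ρE : Matrix (Fin d) (Fin d) ℂ) (hE : ρE.PosSemidef) (hEtr : ρE.trace = 1)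
    (ρAB : Matrix (Fin d × Fin d) (Fin d × Fin d) ℂ)
    (hAB : ρAB.PosSemidef) (hABtr : ρAB.trace = 1)
    (ρB : Matrix (Fin d) (Fin d) ℂ)
    (hρB : ρB = Matrix.of fun k l => ∑ i, ρAB (i, k) (i, l))
    (p₀ p₁ η : ℝ) (hp₁ : 0 ≤ p₁) (hsum : p₀ + p₁ = 1)
    (hη₀ : 0 ≤ η)
    (hγ : 0 ≤ p₁ * (1 - η) - p₀)
    (hΩ : ((p₁ * η) • ρAB + (p₁ * (1 - η) - p₀) • (ρE ⊗ₖ ρB)).IsHermitian) :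
    ((p₁ * η) • ρAB + (p₁ * (1 - η) - p₀) • (ρE ⊗ₖ ρB)).PosSemidef ∧
      traceNorm hΩ = p₁ - p₀ ∧
      (1 - traceNorm hΩ) / 2 = p₀ := by
  replace hρB : ρB = ρAB.partialTraceLeft := hρB
  have hΩpsd : ((p₁ * η) • ρAB + (p₁ * (1 - η) - p₀) • (ρE ⊗ₖ ρB)).PosSemidef :=
    (hAB.smul (by positivity)).add
      ((hE.kronecker (hρB ▸ hAB.partialTraceLeft)).smul hγ)
  have htrace : ((p₁ * η) • ρAB + (p₁ * (1 - η) - p₀) • (ρE ⊗ₖ ρB)).trace = ↑(p₁ - p₀) := by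
    rw [trace_add, trace_smul, trace_smul, trace_kronecker, hρB, trace_partialTraceLeft, hABtr,
      hEtr]
    simp only [Complex.real_smul, mul_one]
    push_cast
    ring
  have hnorm : traceNorm hΩ = p₁ - p₀ := by
    exact_mod_cast (traceNorm_eq_trace hΩ hΩpsd).trans htrace
  exact ⟨hΩpsd, hnorm, by rw [hnorm]; linarith⟩

/-- **Region I, quantum illumination.** If `p₀ ≤ p₁` and `γ := p₁(1-η) - p₀ ≥ 0`, then
`Ω_q = p₁η·ρ_AB + γ·(ρ_E ⊗ ρ_B)` is positive semidefinite, its trace norm equals `p₁ - p₀`,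
and the minimum-error probability `(1 - ‖Ω_q‖₁)/2` equals `p₀`, for every (pure or mixed)
bipartite signal state `ρ_AB`, where `ρ_B` is the reduced state on the second factor. -/
theorem region_I_quantum {d : ℕ}
    (ρE : Matrix (Fin d) (Fin d) ℂ) (hE : ρE.PosSemidef) (hEtr : ρE.trace = 1)
    (ρAB : Matrix (Fin d × Fin d) (Fin d × Fin d) ℂ)
    (hAB : ρAB.PosSemidef) (hABtr : ρAB.trace = 1)
    (ρB : Matrix (Fin d) (Fin d) ℂ)
    (hρB : ρB = Matrix.of fun k l => ∑ i, ρAB (i, k) (i, l))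
    (p₀ p₁ η : ℝ) (hp₀ : 0 ≤ p₀) (hp₁ : 0 ≤ p₁) (hsum : p₀ + p₁ = 1)
    (hp : p₀ ≤ p₁) (hη₀ : 0 ≤ η) (hη₁ : η ≤ 1)
    (hγ : 0 ≤ p₁ * (1 - η) - p₀)
    (hΩ : ((p₁ * η) • ρAB + (p₁ * (1 - η) - p₀) • (ρE ⊗ₖ ρB)).IsHermitian) :
    ((p₁ * η) • ρAB + (p₁ * (1 - η) - p₀) • (ρE ⊗ₖ ρB)).PosSemidef ∧
      traceNorm hΩ = p₁ - p₀ ∧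
      (1 - traceNorm hΩ) / 2 = p₀ :=
  region_I_quantum_general ρE hE hEtr ρAB hAB hABtr ρB hρB p₀ p₁ η hp₁ hsum hη₀ hγ hΩ
end

section
/- Let ρ and ρ_E be d×d complex density matrices, let λ_min denote the smallest eigenvalue of ρ_E, let p₀, p₁ ≥ 0 with p₀ + p₁ = 1 and p₀ ≥ p₁, and let η ∈ [0,1]. Set γ := p₁(1−η) − p₀. If p₁η + γ·λ_min ≤ 0, then the matrix Ω_c := p₁η·ρ + γ·ρ_E is negative semidefinite and its trace norm equals p₀ − p₁; consequently P_err = (1 − ‖Ω_c‖₁)/2 equals p₁, for every (pure or mixed) signal state ρ. -/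
open Matrix BigOperators Kronecker ComplexOrder

/-! In the Loewner order `A ≤ B ↔ (B - A).PosSemidef` we have `ρ ≤ 1` and
`λ_min • 1 ≤ ρ_E`, so `Ω_c ≤ (p₁η + γ λ_min) • 1 ≤ 0` (here `p₁η ≥ 0` and `γ ≤ 0` because
`p₀ ≥ p₁`). A negative semidefinite matrix has nonpositive eigenvalues, so its trace norm is minus
its trace, and `tr Ω_c = p₁η + γ = p₁ - p₀`. -/

open scoped MatrixOrder

namespace Matrix

variable {n 𝕜 : Type*} [Fintype n] [DecidableEq n] [RCLike 𝕜] {A : Matrix n n 𝕜}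

theorem IsHermitian.algebraMap_le_of_le_eigenvalues (hA : A.IsHermitian) {c : ℝ}
    (h : ∀ i, c ≤ hA.eigenvalues i) : algebraMap ℝ (Matrix n n 𝕜) c ≤ A := by
  refine algebraMap_le_of_le_spectrum ?_ hA.isSelfAdjoint
  rw [hA.spectrum_real_eq_range_eigenvalues]
  rintro _ ⟨i, rfl⟩
  exact h i

theorem IsHermitian.le_algebraMap_of_eigenvalues_le (hA : A.IsHermitian) {c : ℝ}
    (h : ∀ i, hA.eigenvalues i ≤ c) : A ≤ algebraMap ℝ (Matrix n n 𝕜) c := by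
  refine le_algebraMap_of_spectrum_le ?_ hA.isSelfAdjoint
  rw [hA.spectrum_real_eq_range_eigenvalues]
  rintro _ ⟨i, rfl⟩
  exact h i

theorem IsHermitian.eigenvalues_nonpos_of_nonpos (hA : A.IsHermitian) (h : A ≤ 0)
    (i : n) : hA.eigenvalues i ≤ 0 := by
  have := (le_iff.mp h).re_dotProduct_nonneg (hA.eigenvectorBasis i)
  rw [hA.eigenvalues_eq]
  simpa [neg_mulVec] using this

theorem PosSemidef.eigenvalues_le_re_trace (hA : A.PosSemidef) (i : n) :
    hA.1.eigenvalues i ≤ RCLike.re A.trace := by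
  rw [hA.1.trace_eq_sum_eigenvalues, ← RCLike.ofReal_sum, RCLike.ofReal_re]
  exact Finset.single_le_sum (fun j _ => hA.eigenvalues_nonneg j) (Finset.mem_univ i)

theorem PosSemidef.le_one_of_trace_eq_one (hA : A.PosSemidef) (h : A.trace = 1) :
    A ≤ 1 := by
  rw [← map_one (algebraMap ℝ (Matrix n n 𝕜))]
  exact hA.1.le_algebraMap_of_eigenvalues_le fun i => by
    simpa [h] using hA.eigenvalues_le_re_trace i

end Matrix

theorem smul_add_smul_nonpos {A : Type*} [Ring A] [PartialOrder A] [IsOrderedAddMonoid A]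
    [ZeroLEOneClass A] [Algebra ℝ A] [PosSMulMono ℝ A] {ρ σ : A} {a γ c : ℝ}
    (hρ : ρ ≤ 1) (hσ : algebraMap ℝ A c ≤ σ) (ha : 0 ≤ a) (hγ : γ ≤ 0) (h : a + γ * c ≤ 0) :
    a • ρ + γ • σ ≤ 0 := by
  rw [Algebra.algebraMap_eq_smul_one] at hσ
  calc a • ρ + γ • σ ≤ a • (1 : A) + γ • c • (1 : A) :=
        add_le_add (smul_le_smul_of_nonneg_left hρ ha) (smul_le_smul_of_nonpos_left hσ hγ)
    _ = (a + γ * c) • (1 : A) := by module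
    _ ≤ 0 := smul_nonpos_of_nonpos_of_nonneg h zero_le_one

theorem traceNorm_eq_neg_re_trace_of_nonpos {n : Type*} [Fintype n] [DecidableEq n]
    {A : Matrix n n ℂ} (hA : A.IsHermitian) (h : A ≤ 0) : traceNorm hA = -A.trace.re := by
  rw [traceNorm, hA.trace_eq_sum_eigenvalues, Complex.re_sum, ← Finset.sum_neg_distrib]
  exact Finset.sum_congr rfl fun i _ => by
    simp [abs_of_nonpos (hA.eigenvalues_nonpos_of_nonpos h i)]

theorem region_II_conventional_general {d : ℕ}
    (ρ ρE : Matrix (Fin d) (Fin d) ℂ)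
    (hρ : ρ.PosSemidef) (hρtr : ρ.trace = 1)
    (hE : ρE.PosSemidef) (hEtr : ρE.trace = 1)
    (lamMin : ℝ) (hmin_le : ∀ i, lamMin ≤ hE.1.eigenvalues i)
    (p₀ p₁ η : ℝ) (hp₁ : 0 ≤ p₁) (hsum : p₀ + p₁ = 1)
    (hp : p₁ ≤ p₀) (hη₀ : 0 ≤ η)
    (hcond : p₁ * η + (p₁ * (1 - η) - p₀) * lamMin ≤ 0)
    (hΩ : ((p₁ * η) • ρ + (p₁ * (1 - η) - p₀) • ρE).IsHermitian) :
    (-((p₁ * η) • ρ + (p₁ * (1 - η) - p₀) • ρE)).PosSemidef ∧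
      traceNorm hΩ = p₀ - p₁ ∧
      (1 - traceNorm hΩ) / 2 = p₁ := by
  have hγ : p₁ * (1 - η) - p₀ ≤ 0 := by nlinarith
  have hΩ_nonpos : (p₁ * η) • ρ + (p₁ * (1 - η) - p₀) • ρE ≤ 0 :=
    smul_add_smul_nonpos (hρ.le_one_of_trace_eq_one hρtr)
      (hE.1.algebraMap_le_of_le_eigenvalues hmin_le) (mul_nonneg hp₁ hη₀) hγ hcond
  have hnorm : traceNorm hΩ = p₀ - p₁ := by
    rw [traceNorm_eq_neg_re_trace_of_nonpos hΩ hΩ_nonpos, trace_add, trace_smul, trace_smul,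
      hρtr, hEtr]
    simp only [Complex.add_re, Complex.real_smul, Complex.mul_re, Complex.ofReal_re,
      Complex.ofReal_im, Complex.one_re, Complex.one_im]
    ring
  refine ⟨by simpa using le_iff.mp hΩ_nonpos, hnorm, ?_⟩
  rw [hnorm]
  linarith

/-- **Region II, conventional illumination.** If `p₀ ≥ p₁` and
`p₁η + γ·λ_min ≤ 0` where `γ := p₁(1-η) - p₀` and `λ_min` is the smallest eigenvalue of `ρ_E`,
then `Ω_c = p₁η·ρ + γ·ρ_E` is negative semidefinite (i.e. `-Ω_c` is positive semidefinite),
its trace norm equals `p₀ - p₁`, and the minimum-error probability `(1 - ‖Ω_c‖₁)/2`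
equals `p₁`, for every (pure or mixed) signal state `ρ`. -/
theorem region_II_conventional {d : ℕ}
    (ρ ρE : Matrix (Fin d) (Fin d) ℂ)
    (hρ : ρ.PosSemidef) (hρtr : ρ.trace = 1)
    (hE : ρE.PosSemidef) (hEtr : ρE.trace = 1)
    (lamMin : ℝ) (hmin_le : ∀ i, lamMin ≤ hE.1.eigenvalues i)
    (hmin_mem : ∃ i, hE.1.eigenvalues i = lamMin)
    (p₀ p₁ η : ℝ) (hp₀ : 0 ≤ p₀) (hp₁ : 0 ≤ p₁) (hsum : p₀ + p₁ = 1)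
    (hp : p₁ ≤ p₀) (hη₀ : 0 ≤ η) (hη₁ : η ≤ 1)
    (hcond : p₁ * η + (p₁ * (1 - η) - p₀) * lamMin ≤ 0)
    (hΩ : ((p₁ * η) • ρ + (p₁ * (1 - η) - p₀) • ρE).IsHermitian) :
    (-((p₁ * η) • ρ + (p₁ * (1 - η) - p₀) • ρE)).PosSemidef ∧
      traceNorm hΩ = p₀ - p₁ ∧
      (1 - traceNorm hΩ) / 2 = p₁ :=
  region_II_conventional_general ρ ρE hρ hρtr hE hEtr lamMin hmin_le p₀ p₁ η hp₁ hsum hp hη₀ hcond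
    hΩ
end

section
/- Let ρ_E be a positive definite d×d density matrix with eigenvalues λ₁,…,λ_d > 0, and let λ_h := (Σ_{i=1}^d λ_i^{-1})^{-1}. Let ρ_AB be a d²×d² density matrix on ℂ^d ⊗ ℂ^d with reduced state ρ_B on the second factor, let p₀, p₁ ≥ 0 with p₀ + p₁ = 1 and p₀ ≥ p₁, and let η ∈ [0,1]. Set γ := p₁(1−η) − p₀. If p₁η + γ·λ_h ≤ 0, then Ω_q := p₁η·ρ_AB + γ·(ρ_E ⊗ ρ_B) is negative semidefinite and its trace norm equals p₀ − p₁; consequently P_err = (1 − ‖Ω_q‖₁)/2 equals p₁, for every (pure or mixed) bipartite signal state ρ_AB. -/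
open Matrix BigOperators Kronecker ComplexOrder

/-!
The heart of the matter is the operator inequality `ρ_AB ≤ λ_h⁻¹ • (ρ_E ⊗ ρ_B)`, valid for every
state `ρ_AB`. In an eigenbasis of `ρ_E = diag λ`, split a vector `v` into its blocks
`vᵢ = eᵢ ⊗ wᵢ`. Since `x ↦ ⟨x, ρ_AB x⟩` is the square of a seminorm, the triangle inequality and
Cauchy–Schwarz give `⟨v, ρ_AB v⟩ ≤ (∑ λᵢ⁻¹) ∑ λᵢ ⟨vᵢ, ρ_AB vᵢ⟩`, and `⟨eᵢ ⊗ w, ρ_AB (eᵢ ⊗ w)⟩`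
is one of the nonnegative summands of `⟨w, ρ_B w⟩`. Under the hypothesis on `p₁η + γλ_h`,
`-Ω_q = p₁η (λ_h⁻¹ ρ_E ⊗ ρ_B - ρ_AB) - (p₁η λ_h⁻¹ + γ) ρ_E ⊗ ρ_B` is then a sum of positive
semidefinite matrices, and the trace norm of a negative semidefinite matrix is minus its trace,
`-(p₁η + γ) = p₀ - p₁`.
-/

open scoped MatrixOrder

theorem norm_sum_sq_le_sum_inv_mul_sum_mul_norm_sq {E ι : Type*} [SeminormedAddCommGroup E]
    (s : Finset ι) (x : ι → E) {μ : ι → ℝ} (hμ : ∀ i ∈ s, 0 < μ i) :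
    ‖∑ i ∈ s, x i‖ ^ 2 ≤ (∑ i ∈ s, (μ i)⁻¹) * ∑ i ∈ s, μ i * ‖x i‖ ^ 2 := by
  calc ‖∑ i ∈ s, x i‖ ^ 2 ≤ (∑ i ∈ s, ‖x i‖) ^ 2 := by gcongr; exact norm_sum_le s x
    _ ≤ _ := Finset.sum_sq_le_sum_mul_sum_of_sq_le_mul s
        (fun i hi => (inv_pos.2 (hμ i hi)).le) (fun i hi => by have := hμ i hi; positivity)
        (fun i hi => by rw [← mul_assoc, inv_mul_cancel₀ (hμ i hi).ne', one_mul])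

namespace Matrix

variable {𝕜 R m n : Type*} [RCLike 𝕜]

theorem PosSemidef.re_dotProduct_mulVec_sum_le [Fintype n] {ι : Type*} {A : Matrix n n 𝕜}
    (hA : A.PosSemidef) (s : Finset ι) (x : ι → n → 𝕜) {μ : ι → ℝ} (hμ : ∀ i ∈ s, 0 < μ i) :
    RCLike.re (star (∑ i ∈ s, x i) ⬝ᵥ A *ᵥ ∑ i ∈ s, x i) ≤
      (∑ i ∈ s, (μ i)⁻¹) * ∑ i ∈ s, μ i * RCLike.re (star (x i) ⬝ᵥ A *ᵥ x i) := by
  -- `n → 𝕜` already carries the sup norm, so the seminorm induced by `A` is passed explicitly.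
  let _ := A.toInnerProductSpace hA
  have hq (y : n → 𝕜) :
      RCLike.re (star y ⬝ᵥ A *ᵥ y) = @norm _ (A.toSeminormedAddCommGroup hA).toNorm y ^ 2 := by
    rw [@norm_sq_eq_re_inner 𝕜 _ _ (A.toSeminormedAddCommGroup hA), dotProduct_comm]
    rfl
  simp only [hq]
  exact @norm_sum_sq_le_sum_inv_mul_sum_mul_norm_sq _ _ (A.toSeminormedAddCommGroup hA) s x μ hμ

section PartialTrace

variable [Fintype m]

def partialTraceFst [AddCommMonoid R] (M : Matrix (m × n) (m × n) R) : Matrix n n R :=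
  of fun k l => ∑ i, M (i, k) (i, l)

theorem partialTraceFst_eq_sum_submatrix [AddCommMonoid R] (M : Matrix (m × n) (m × n) R) :
    partialTraceFst M = ∑ i, M.submatrix (Prod.mk i) (Prod.mk i) := by
  ext k l
  simp [partialTraceFst, Matrix.sum_apply]

theorem trace_partialTraceFst [Fintype n] [AddCommMonoid R] (M : Matrix (m × n) (m × n) R) :
    (partialTraceFst M).trace = M.trace := by
  simp only [trace, diag, partialTraceFst, of_apply, Fintype.sum_prod_type]
  exact Finset.sum_comm

theorem PosSemidef.partialTraceFst {σ : Matrix (m × n) (m × n) 𝕜} (hσ : σ.PosSemidef) :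
    (partialTraceFst σ).PosSemidef := by
  rw [partialTraceFst_eq_sum_submatrix]
  exact posSemidef_sum _ fun i _ => hσ.submatrix _

variable [DecidableEq m]

theorem sum_uncurry_single_curry (v : m × n → 𝕜) :
    ∑ i, Function.uncurry (Pi.single i (Function.curry v i)) = v := by
  ext ⟨i, k⟩
  simp [Finset.sum_apply, Pi.single_apply, ite_apply]

variable [Fintype n]

theorem star_dotProduct_partialTraceFst_mulVec (σ : Matrix (m × n) (m × n) 𝕜) (w : n → 𝕜) :
    star w ⬝ᵥ partialTraceFst σ *ᵥ w =
      ∑ i, star (Function.uncurry (Pi.single i w)) ⬝ᵥ σ *ᵥ Function.uncurry (Pi.single i w) := by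
  simp only [dotProduct, Pi.star_apply, RCLike.star_def, mulVec, partialTraceFst, of_apply,
    Finset.sum_mul, Finset.mul_sum, Fintype.sum_prod_type, Function.uncurry_apply_pair,
    Pi.single_apply, ite_apply, Pi.zero_apply, mul_ite, mul_zero, Finset.sum_ite_irrel,
    Finset.sum_const_zero, Finset.sum_ite_eq', Finset.mem_univ, ↓reduceIte,
    apply_ite (starRingEnd 𝕜), map_zero, ite_mul, zero_mul]
  exact (Finset.sum_congr rfl fun _ _ => Finset.sum_comm).trans Finset.sum_comm

theorem PosSemidef.re_dotProduct_mulVec_uncurry_single_le {σ : Matrix (m × n) (m × n) 𝕜}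
    (hσ : σ.PosSemidef) (i : m) (w : n → 𝕜) :
    RCLike.re (star (Function.uncurry (Pi.single i w)) ⬝ᵥ σ *ᵥ Function.uncurry (Pi.single i w)) ≤
      RCLike.re (star w ⬝ᵥ Matrix.partialTraceFst σ *ᵥ w) := by
  rw [star_dotProduct_partialTraceFst_mulVec, map_sum]
  exact Finset.single_le_sum
    (fun j _ => hσ.re_dotProduct_nonneg (Function.uncurry (Pi.single j w))) (Finset.mem_univ i)

theorem star_dotProduct_diagonal_kronecker_mulVec (μ : m → 𝕜) (τ : Matrix n n 𝕜)
    (v : m × n → 𝕜) :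
    star v ⬝ᵥ (diagonal μ ⊗ₖ τ) *ᵥ v =
      ∑ i, μ i * (star (Function.curry v i) ⬝ᵥ τ *ᵥ Function.curry v i) := by
  simp only [dotProduct, Pi.star_apply, RCLike.star_def, mulVec, kroneckerMap_apply,
    diagonal_apply, ite_mul, zero_mul, Fintype.sum_prod_type, Finset.sum_ite_irrel,
    Finset.sum_const_zero, Finset.sum_ite_eq, Finset.mem_univ, ↓reduceIte, Finset.mul_sum,
    Function.curry_apply]
  ac_rfl

theorem le_sum_inv_smul_diagonal_kronecker_partialTraceFst {σ : Matrix (m × n) (m × n) 𝕜}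
    (hσ : σ.PosSemidef) {μ : m → ℝ} (hμ : ∀ i, 0 < μ i) :
    σ ≤ (∑ i, (μ i)⁻¹) • (diagonal (RCLike.ofReal ∘ μ) ⊗ₖ partialTraceFst σ) := by
  set S := ∑ i, (μ i)⁻¹
  set K := diagonal (RCLike.ofReal ∘ μ) ⊗ₖ partialTraceFst σ
  have hK : K.PosSemidef :=
    (PosSemidef.diagonal fun i => by simpa using (hμ i).le).kronecker hσ.partialTraceFst
  have hH : (S • K - σ).IsHermitian := (hK.1.smul (IsSelfAdjoint.all S)).sub hσ.1
  refine PosSemidef.of_dotProduct_mulVec_nonneg hH fun v => ?_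
  refine RCLike.nonneg_iff.2 ⟨?_, hH.im_star_dotProduct_mulVec_self v⟩
  have hv : RCLike.re (star v ⬝ᵥ σ *ᵥ v) ≤ S * RCLike.re (star v ⬝ᵥ K *ᵥ v) := by
    calc RCLike.re (star v ⬝ᵥ σ *ᵥ v)
        ≤ S * ∑ i, μ i * RCLike.re (star (Function.uncurry (Pi.single i (Function.curry v i))) ⬝ᵥ
            σ *ᵥ Function.uncurry (Pi.single i (Function.curry v i))) := by
          conv_lhs => rw [← sum_uncurry_single_curry v]
          exact hσ.re_dotProduct_mulVec_sum_le _ _ fun i _ => hμ i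
      _ ≤ S * ∑ i, μ i * RCLike.re (star (Function.curry v i) ⬝ᵥ
            partialTraceFst σ *ᵥ Function.curry v i) := by
          gcongr S * ∑ i, _ * ?_ with i
          · exact Finset.sum_nonneg fun i _ => (inv_pos.2 (hμ i)).le
          · exact (hμ i).le
          · exact hσ.re_dotProduct_mulVec_uncurry_single_le i _
      _ = S * RCLike.re (star v ⬝ᵥ K *ᵥ v) := by
          simp [K, star_dotProduct_diagonal_kronecker_mulVec, map_sum]
  simpa [sub_mulVec, smul_mulVec, dotProduct_sub, dotProduct_smul, RCLike.smul_re] using hv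

variable [DecidableEq n]

theorem partialTraceFst_conj_kronecker_one {U : Matrix m m 𝕜} (hU : U ∈ unitaryGroup m 𝕜)
    (σ : Matrix (m × n) (m × n) 𝕜) :
    partialTraceFst ((U ⊗ₖ 1)ᴴ * σ * (U ⊗ₖ 1)) = partialTraceFst σ := by
  have hUU (a c : m) : ∑ i, U c i * starRingEnd 𝕜 (U a i) = if c = a then 1 else 0 := by
    simpa [mul_apply, one_apply] using congrFun (congrFun (mem_unitaryGroup_iff.mp hU) c) a
  ext k l
  calc _ = ∑ i, ∑ c, ∑ a, U c i * starRingEnd 𝕜 (U a i) * σ (a, k) (c, l) := by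
        simp only [partialTraceFst, of_apply, mul_apply, conjTranspose_apply, kroneckerMap_apply,
          one_apply, mul_ite, mul_one, mul_zero, RCLike.star_def, apply_ite (starRingEnd 𝕜),
          map_zero, ite_mul, zero_mul, Fintype.sum_prod_type, Finset.sum_ite_eq', Finset.mem_univ,
          ↓reduceIte, Finset.sum_mul]
        ac_rfl
    _ = ∑ a, ∑ c, (∑ i, U c i * starRingEnd 𝕜 (U a i)) * σ (a, k) (c, l) := by
        simp only [Finset.sum_mul]
        exact (Finset.sum_congr rfl fun _ _ => Finset.sum_comm).trans
          (Finset.sum_comm.trans (Finset.sum_congr rfl fun _ _ => Finset.sum_comm))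
    _ = _ := by simp [hUU, partialTraceFst]

theorem le_sum_inv_eigenvalues_smul_kronecker_partialTraceFst {ρ : Matrix m m 𝕜} (hρ : ρ.PosDef)
    {σ : Matrix (m × n) (m × n) 𝕜} (hσ : σ.PosSemidef) :
    σ ≤ (∑ i, (hρ.1.eigenvalues i)⁻¹) • (ρ ⊗ₖ partialTraceFst σ) := by
  set U := hρ.1.eigenvectorUnitary
  set W : Matrix (m × n) (m × n) 𝕜 := (U : Matrix m m 𝕜) ⊗ₖ 1
  have hWW : W * Wᴴ = 1 := mem_unitaryGroup_iff.mp (kronecker_mem_unitary U.2 (one_mem _))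
  have hρU : ρ = (U : Matrix m m 𝕜) * diagonal (RCLike.ofReal ∘ hρ.1.eigenvalues) *
      (U : Matrix m m 𝕜)ᴴ :=
    hρ.1.spectral_theorem
  have key := le_sum_inv_smul_diagonal_kronecker_partialTraceFst
    (hσ.conjTranspose_mul_mul_same W) hρ.eigenvalues_pos
  rw [partialTraceFst_conj_kronecker_one U.2] at key
  convert star_right_conjugate_le_conjugate key W using 1
  · rw [star_eq_conjTranspose, ← Matrix.mul_assoc, ← Matrix.mul_assoc, hWW, Matrix.one_mul,
      Matrix.mul_assoc, hWW, Matrix.mul_one]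
  · rw [mul_smul_comm, smul_mul_assoc, star_eq_conjTranspose, conjTranspose_kronecker,
      conjTranspose_one, ← mul_kronecker_mul, ← mul_kronecker_mul, Matrix.one_mul, Matrix.mul_one,
      ← hρU]

end PartialTrace

theorem PosSemidef.neg_smul_add_smul [Fintype n] {A K : Matrix n n 𝕜} (hK : K.PosSemidef)
    {S a γ : ℝ} (hA : A ≤ S • K) (ha : 0 ≤ a) (h : a * S + γ ≤ 0) :
    (-(a • A + γ • K)).PosSemidef := by
  have heq : -(a • A + γ • K) = a • (S • K - A) + (-(a * S + γ)) • K := by module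
  rw [heq]
  exact ((le_iff.mp hA).smul ha).add (hK.smul (neg_nonneg.mpr h))

end Matrix

theorem traceNorm_eq_neg_re_trace {n : Type*} [Fintype n] [DecidableEq n] {A : Matrix n n ℂ}
    (hA : A.IsHermitian) (hneg : (-A).PosSemidef) : traceNorm hA = -A.trace.re := by
  have hev (i : n) : hA.eigenvalues i ≤ 0 := by
    have := hneg.re_dotProduct_nonneg (hA.eigenvectorBasis i)
    rw [neg_mulVec, dotProduct_neg, map_neg] at this
    rw [hA.eigenvalues_eq]
    exact neg_nonneg.mp this
  rw [traceNorm, hA.trace_eq_sum_eigenvalues, Complex.re_sum, ← Finset.sum_neg_distrib]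
  exact Finset.sum_congr rfl fun i _ => by simpa using abs_of_nonpos (hev i)

theorem region_II_quantum_general {d : ℕ}
    (ρE : Matrix (Fin d) (Fin d) ℂ) (hE : ρE.PosDef) (hEtr : ρE.trace = 1)
    (lamH : ℝ) (hlamH : lamH = (∑ i, (hE.1.eigenvalues i)⁻¹)⁻¹)
    (ρAB : Matrix (Fin d × Fin d) (Fin d × Fin d) ℂ)
    (hAB : ρAB.PosSemidef) (hABtr : ρAB.trace = 1)
    (ρB : Matrix (Fin d) (Fin d) ℂ)
    (hρB : ρB = Matrix.of fun k l => ∑ i, ρAB (i, k) (i, l))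
    (p₀ p₁ η : ℝ) (hp₁ : 0 ≤ p₁) (hsum : p₀ + p₁ = 1)
    (hη₀ : 0 ≤ η)
    (hcond : p₁ * η + (p₁ * (1 - η) - p₀) * lamH ≤ 0)
    (hΩ : ((p₁ * η) • ρAB + (p₁ * (1 - η) - p₀) • (ρE ⊗ₖ ρB)).IsHermitian) :
    (-((p₁ * η) • ρAB + (p₁ * (1 - η) - p₀) • (ρE ⊗ₖ ρB))).PosSemidef ∧
      traceNorm hΩ = p₀ - p₁ ∧
      (1 - traceNorm hΩ) / 2 = p₁ := by
  obtain rfl : ρB = partialTraceFst ρAB := hρB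
  have : Nonempty (Fin d) := by
    by_contra h
    simp [not_nonempty_iff.mp h, trace] at hEtr
  have hS : 0 < ∑ i, (hE.1.eigenvalues i)⁻¹ :=
    Finset.sum_pos (fun i _ => inv_pos.2 (hE.eigenvalues_pos i)) Finset.univ_nonempty
  have hcond' : p₁ * η * ∑ i, (hE.1.eigenvalues i)⁻¹ + (p₁ * (1 - η) - p₀) ≤ 0 := by
    have := mul_nonpos_of_nonpos_of_nonneg hcond hS.le
    rwa [hlamH, add_mul, mul_assoc _ _⁻¹, inv_mul_cancel₀ hS.ne', mul_one] at this
  have hnegΩ := (hE.posSemidef.kronecker hAB.partialTraceFst).neg_smul_add_smul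
    (le_sum_inv_eigenvalues_smul_kronecker_partialTraceFst hE hAB) (mul_nonneg hp₁ hη₀) hcond'
  have htr : ((p₁ * η) • ρAB + (p₁ * (1 - η) - p₀) • (ρE ⊗ₖ partialTraceFst ρAB)).trace =
      ((p₁ - p₀ : ℝ) : ℂ) := by
    rw [trace_add, trace_smul, trace_smul, trace_kronecker, trace_partialTraceFst, hEtr, hABtr]
    simp only [mul_one, Complex.real_smul]
    push_cast
    ring
  have htn : traceNorm hΩ = p₀ - p₁ := by
    rw [traceNorm_eq_neg_re_trace hΩ hnegΩ, htr, Complex.ofReal_re, neg_sub]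
  exact ⟨hnegΩ, htn, by rw [htn]; linarith⟩

/-- **Region II, quantum illumination.** Let `ρ_E` be positive definite with eigenvalues
`λ₁,…,λ_d > 0` and `λ_h := (Σᵢ λᵢ⁻¹)⁻¹`. If `p₀ ≥ p₁` and `p₁η + γ·λ_h ≤ 0` where
`γ := p₁(1-η) - p₀`, then `Ω_q = p₁η·ρ_AB + γ·(ρ_E ⊗ ρ_B)` is negative semidefinite
(i.e. `-Ω_q` is positive semidefinite), its trace norm equals `p₀ - p₁`, and the
minimum-error probability `(1 - ‖Ω_q‖₁)/2` equals `p₁`, for every (pure or mixed)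
bipartite signal state `ρ_AB` with reduced state `ρ_B` on the second factor. -/
theorem region_II_quantum {d : ℕ}
    (ρE : Matrix (Fin d) (Fin d) ℂ) (hE : ρE.PosDef) (hEtr : ρE.trace = 1)
    (lamH : ℝ) (hlamH : lamH = (∑ i, (hE.1.eigenvalues i)⁻¹)⁻¹)
    (ρAB : Matrix (Fin d × Fin d) (Fin d × Fin d) ℂ)
    (hAB : ρAB.PosSemidef) (hABtr : ρAB.trace = 1)
    (ρB : Matrix (Fin d) (Fin d) ℂ)
    (hρB : ρB = Matrix.of fun k l => ∑ i, ρAB (i, k) (i, l))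
    (p₀ p₁ η : ℝ) (hp₀ : 0 ≤ p₀) (hp₁ : 0 ≤ p₁) (hsum : p₀ + p₁ = 1)
    (hp : p₁ ≤ p₀) (hη₀ : 0 ≤ η) (hη₁ : η ≤ 1)
    (hcond : p₁ * η + (p₁ * (1 - η) - p₀) * lamH ≤ 0)
    (hΩ : ((p₁ * η) • ρAB + (p₁ * (1 - η) - p₀) • (ρE ⊗ₖ ρB)).IsHermitian) :
    (-((p₁ * η) • ρAB + (p₁ * (1 - η) - p₀) • (ρE ⊗ₖ ρB))).PosSemidef ∧
      traceNorm hΩ = p₀ - p₁ ∧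
      (1 - traceNorm hΩ) / 2 = p₁ :=
  region_II_quantum_general ρE hE hEtr lamH hlamH ρAB hAB hABtr ρB hρB p₀ p₁ η hp₁ hsum hη₀ hcond hΩ
end

section
/- Let ρ_E be a d×d complex density matrix with smallest eigenvalue λ_d and corresponding unit eigenvector θ_d. Let p₀, p₁ ≥ 0 with p₀ + p₁ = 1, η ∈ [0,1], and set γ := p₁(1−η) − p₀. Assume γ < 0 and p₁η + γ·λ_d > 0 (Region III). Then: (a) for every unit vector ψ ∈ ℂ^d, ‖p₁η·|ψ⟩⟨ψ| + γ·ρ_E‖₁ ≤ p₁η − γ + 2γλ_d; (b) equality holds for ψ = θ_d. Consequently the minimum error over all conventional signal states equals P_err = p₀ + γ(1 − λ_d), achieved by the eigenstate of ρ_E with smallest eigenvalue. -/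
/-!
Write `Ω = a |ψ⟩⟨ψ| + γ ρ_E` with `a = p₁η` and `γ < 0`. Since `ρ_E ≥ λ_d`, an eigenvalue `μᵢ` of `Ω`
with unit eigenvector `bᵢ` satisfies `μᵢ ≤ a |⟨ψ, bᵢ⟩|² + γ λ_d`, and the weights `|⟨ψ, bᵢ⟩|²` sum
to `1`. As `γ λ_d ≤ 0` is paid once by every positive eigenvalue, the positive eigenvalues sum to at
most `a + γ λ_d`, and `‖Ω‖₁ = 2 ∑ μᵢ⁺ - tr Ω` with `tr Ω = a + γ` gives the bound. For `ψ = θ_d`,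
`θ_d` is itself an eigenvector of `Ω` with eigenvalue `a + γ λ_d`, which gives the reverse bound.
-/

open Matrix BigOperators Kronecker ComplexOrder

lemma Finset.sum_posPart_le_of_le_mul_add {ι : Type*} [Fintype ι] {μ w : ι → ℝ} {a c : ℝ}
    (hw : ∀ i, 0 ≤ w i) (hw₁ : ∑ i, w i ≤ 1) (hc : c ≤ 0) (hac : 0 ≤ a + c)
    (hμ : ∀ i, μ i ≤ a * w i + c) : ∑ i, (μ i)⁺ ≤ a + c := by
  set S := univ.filter fun i => 0 < μ i
  have hS : ∑ i, (μ i)⁺ = ∑ i ∈ S, μ i := by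
    rw [sum_filter]
    refine sum_congr rfl fun i _ => ?_
    split_ifs with h
    · exact posPart_of_nonneg h.le
    · exact posPart_of_nonpos (not_lt.mp h)
  rw [hS]
  rcases S.eq_empty_or_nonempty with hempty | hne
  · simpa [hempty] using hac
  have hcard : (1 : ℝ) ≤ S.card := by exact_mod_cast hne.card_pos
  calc ∑ i ∈ S, μ i ≤ ∑ i ∈ S, (a * w i + c) := sum_le_sum fun i _ => hμ i
    _ = a * ∑ i ∈ S, w i + S.card * c := by
      rw [sum_add_distrib, ← mul_sum, sum_const, nsmul_eq_mul]
    _ ≤ a + c := by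
      have hwS : ∑ i ∈ S, w i ≤ 1 :=
        (sum_le_sum_of_subset_of_nonneg S.subset_univ fun i _ _ => hw i).trans hw₁
      have ha : 0 ≤ a := by linarith
      linarith [mul_le_of_le_one_right ha hwS, mul_le_mul_of_nonpos_right hcard hc]

section

variable {𝕜 n : Type*} [RCLike 𝕜] [Fintype n]

lemma star_dotProduct_self_eq_sum_norm_sq (v : n → 𝕜) :
    star v ⬝ᵥ v = ((∑ i, ‖v i‖ ^ 2 : ℝ) : 𝕜) := by
  simp [dotProduct, RCLike.conj_mul]

lemma star_dotProduct_vecMulVec_mulVec (ψ v : n → 𝕜) :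
    star v ⬝ᵥ vecMulVec ψ (star ψ) *ᵥ v = ((‖star ψ ⬝ᵥ v‖ ^ 2 : ℝ) : 𝕜) := by
  rw [vecMulVec_mulVec, op_smul_eq_smul, dotProduct_smul, smul_eq_mul, star_dotProduct v ψ,
    RCLike.star_def, RCLike.mul_conj, RCLike.ofReal_pow]

namespace Matrix.IsHermitian

variable [DecidableEq n] {A : Matrix n n 𝕜} (hA : A.IsHermitian)

open scoped MatrixOrder in
lemma mul_re_dotProduct_self_le {t : ℝ} (ht : ∀ i, t ≤ hA.eigenvalues i) (v : n → 𝕜) :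
    t * RCLike.re (star v ⬝ᵥ v) ≤ RCLike.re (star v ⬝ᵥ A *ᵥ v) := by
  have hpsd : (A - algebraMap ℝ _ t).PosSemidef := by
    refine Matrix.le_iff.1 ((algebraMap_le_iff_le_spectrum hA.isSelfAdjoint).2 ?_)
    rw [hA.spectrum_real_eq_range_eigenvalues]
    rintro _ ⟨i, rfl⟩
    exact ht i
  have := hpsd.re_dotProduct_nonneg v
  rw [Algebra.algebraMap_eq_smul_one, sub_mulVec, smul_mulVec, one_mulVec, dotProduct_sub,
    dotProduct_smul, map_sub, RCLike.smul_re] at this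
  linarith

lemma sum_sq_norm_dotProduct_eigenvectorBasis (ψ : n → 𝕜) :
    ∑ i, ‖star ψ ⬝ᵥ hA.eigenvectorBasis i‖ ^ 2 = RCLike.re (star ψ ⬝ᵥ ψ) := by
  have := hA.eigenvectorBasis.sum_sq_norm_inner_left (WithLp.toLp 2 ψ)
  rw [@norm_sq_eq_re_inner 𝕜] at this
  simpa only [EuclideanSpace.inner_eq_star_dotProduct, WithLp.ofLp_toLp,
    dotProduct_comm _ (star ψ)] using this

lemma sum_eigenvalues_eq_re_trace : ∑ i, hA.eigenvalues i = RCLike.re A.trace := by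
  simp [hA.trace_eq_sum_eigenvalues]

lemma exists_eigenvalues_eq {v : n → 𝕜} (hv : v ≠ 0) {μ : ℝ} (h : A *ᵥ v = μ • v) :
    ∃ i, hA.eigenvalues i = μ := by
  have hv' : toLin' A v = (μ : 𝕜) • v := by
    rw [toLin'_apply, h, RCLike.real_smul_eq_coe_smul (K := 𝕜)]
  have : Module.End.HasEigenvalue (toLin' A) (μ : 𝕜) :=
    Module.End.hasEigenvalue_of_hasEigenvector ⟨Module.End.mem_eigenspace_iff.2 hv', hv⟩
  have := this.mem_spectrum
  rw [spectrum_toLin', hA.spectrum_eq_image_range] at this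
  obtain ⟨_, ⟨i, rfl⟩, hi⟩ := this
  exact ⟨i, RCLike.ofReal_injective hi⟩

lemma sum_posPart_eigenvalues_le {ψ : n → 𝕜} (hψ : star ψ ⬝ᵥ ψ = 1) {a c : ℝ} (hc : c ≤ 0)
    (hac : 0 ≤ a + c)
    (hA_le : ∀ v, star v ⬝ᵥ v = 1 → RCLike.re (star v ⬝ᵥ A *ᵥ v) ≤ a * ‖star ψ ⬝ᵥ v‖ ^ 2 + c) :
    ∑ i, (hA.eigenvalues i)⁺ ≤ a + c := by
  refine Finset.sum_posPart_le_of_le_mul_add (w := fun i => ‖star ψ ⬝ᵥ hA.eigenvectorBasis i‖ ^ 2)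
    (fun _ => sq_nonneg _) ?_ hc hac fun i => ?_
  · rw [hA.sum_sq_norm_dotProduct_eigenvectorBasis, hψ, RCLike.one_re]
  · rw [hA.eigenvalues_eq]
    refine hA_le _ ?_
    rw [dotProduct_comm, ← EuclideanSpace.inner_eq_star_dotProduct, inner_self_eq_norm_sq_to_K,
      hA.eigenvectorBasis.orthonormal.1 i, RCLike.ofReal_one, one_pow]

lemma re_dotProduct_smul_vecMulVec_add_smul_mulVec_le {ρ : Matrix n n 𝕜} (hρ : ρ.IsHermitian)
    {lam : ℝ} (hlam : ∀ i, lam ≤ hρ.eigenvalues i) (a : ℝ) {g : ℝ} (hg : g ≤ 0) (ψ v : n → 𝕜)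
    (hv : star v ⬝ᵥ v = 1) :
    RCLike.re (star v ⬝ᵥ (a • vecMulVec ψ (star ψ) + g • ρ) *ᵥ v)
      ≤ a * ‖star ψ ⬝ᵥ v‖ ^ 2 + g * lam := by
  have hρv := hρ.mul_re_dotProduct_self_le hlam v
  rw [hv, RCLike.one_re, mul_one] at hρv
  rw [add_mulVec, smul_mulVec, smul_mulVec, dotProduct_add, dotProduct_smul,
    dotProduct_smul, star_dotProduct_vecMulVec_mulVec, map_add, RCLike.smul_re, RCLike.smul_re,
    RCLike.ofReal_re]
  linarith [mul_le_mul_of_nonpos_left hρv hg]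

end Matrix.IsHermitian

lemma re_trace_smul_vecMulVec_add_smul {ρ : Matrix n n 𝕜} (hρ : ρ.trace = 1) {ψ : n → 𝕜}
    (hψ : star ψ ⬝ᵥ ψ = 1) (a g : ℝ) :
    RCLike.re (a • vecMulVec ψ (star ψ) + g • ρ).trace = a + g := by
  rw [trace_add, trace_smul, trace_smul, trace_vecMulVec, dotProduct_comm, hψ, hρ, map_add,
    RCLike.smul_re, RCLike.smul_re, RCLike.one_re, mul_one, mul_one]

lemma smul_vecMulVec_add_smul_mulVec_self {ρ : Matrix n n 𝕜} {θ : n → 𝕜} {lam : ℝ}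
    (hθ : star θ ⬝ᵥ θ = 1) (hρθ : ρ *ᵥ θ = (lam : 𝕜) • θ) (a g : ℝ) :
    (a • vecMulVec θ (star θ) + g • ρ) *ᵥ θ = (a + g * lam) • θ := by
  rw [add_mulVec, smul_mulVec, smul_mulVec, vecMulVec_mulVec, hθ, hρθ, MulOpposite.op_one,
    one_smul, ← RCLike.real_smul_eq_coe_smul, smul_smul, ← add_smul]

end

section TraceNorm

variable {n : Type*} [Fintype n] [DecidableEq n]

lemma traceNorm_eq_two_mul_sum_posPart_sub_re_trace {A : Matrix n n ℂ} (hA : A.IsHermitian) :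
    traceNorm hA = 2 * ∑ i, (hA.eigenvalues i)⁺ - RCLike.re A.trace := by
  rw [traceNorm, ← hA.sum_eigenvalues_eq_re_trace, Finset.mul_sum, ← Finset.sum_sub_distrib]
  refine Finset.sum_congr rfl fun i _ => ?_
  linarith [posPart_add_negPart (hA.eigenvalues i), posPart_sub_negPart (hA.eigenvalues i)]

lemma two_mul_sub_re_trace_le_traceNorm {A : Matrix n n ℂ} (hA : A.IsHermitian) {v : n → ℂ}
    (hv : v ≠ 0) {μ : ℝ} (hAv : A *ᵥ v = μ • v) :
    2 * μ - RCLike.re A.trace ≤ traceNorm hA := by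
  obtain ⟨k, rfl⟩ := hA.exists_eigenvalues_eq hv hAv
  rw [traceNorm_eq_two_mul_sum_posPart_sub_re_trace]
  have := Finset.single_le_sum (fun i _ => posPart_nonneg (hA.eigenvalues i)) (Finset.mem_univ k)
  linarith [le_posPart (hA.eigenvalues k)]

lemma traceNorm_smul_vecMulVec_add_smul_le {ρ : Matrix n n ℂ} (hρ : ρ.IsHermitian)
    (hρtr : ρ.trace = 1) {lam : ℝ} (hlam₀ : 0 ≤ lam) (hlam : ∀ i, lam ≤ hρ.eigenvalues i)
    {a g : ℝ} (hg : g ≤ 0) (hpos : 0 ≤ a + g * lam) {ψ : n → ℂ} (hψ : star ψ ⬝ᵥ ψ = 1)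
    (hΩ : (a • vecMulVec ψ (star ψ) + g • ρ).IsHermitian) :
    traceNorm hΩ ≤ a - g + 2 * g * lam := by
  have := hΩ.sum_posPart_eigenvalues_le hψ (mul_nonpos_of_nonpos_of_nonneg hg hlam₀) hpos
    (hρ.re_dotProduct_smul_vecMulVec_add_smul_mulVec_le hlam a hg ψ)
  rw [traceNorm_eq_two_mul_sum_posPart_sub_re_trace, re_trace_smul_vecMulVec_add_smul hρtr hψ]
  linarith

end TraceNorm

theorem region_III_conventional_general {d : ℕ}
    (ρE : Matrix (Fin d) (Fin d) ℂ) (hE : ρE.PosSemidef) (hEtr : ρE.trace = 1)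
    (lamD : ℝ) (hle : ∀ i, lamD ≤ hE.1.eigenvalues i)
    (hmem : ∃ i, hE.1.eigenvalues i = lamD)
    (θd : Fin d → ℂ) (hθunit : ∑ i, ‖θd i‖ ^ 2 = 1)
    (hθeig : ρE.mulVec θd = (lamD : ℂ) • θd)
    (p₀ p₁ η : ℝ) (hsum : p₀ + p₁ = 1)
    (hγ : p₁ * (1 - η) - p₀ < 0)
    (hpos : 0 < p₁ * η + (p₁ * (1 - η) - p₀) * lamD) :
    (∀ ψ : Fin d → ℂ, ∑ i, ‖ψ i‖ ^ 2 = 1 →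
      ∀ hΩ : ((p₁ * η) • vecMulVec ψ (star ψ) + (p₁ * (1 - η) - p₀) • ρE).IsHermitian,
        traceNorm hΩ ≤ p₁ * η - (p₁ * (1 - η) - p₀) + 2 * (p₁ * (1 - η) - p₀) * lamD) ∧
    (∀ hΩ : ((p₁ * η) • vecMulVec θd (star θd) + (p₁ * (1 - η) - p₀) • ρE).IsHermitian,
        traceNorm hΩ = p₁ * η - (p₁ * (1 - η) - p₀) + 2 * (p₁ * (1 - η) - p₀) * lamD ∧
        (1 - traceNorm hΩ) / 2 = p₀ + (p₁ * (1 - η) - p₀) * (1 - lamD)) := by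
  have hlam : 0 ≤ lamD := by
    obtain ⟨i, rfl⟩ := hmem
    exact hE.eigenvalues_nonneg i
  have hunit {ψ : Fin d → ℂ} (hψ : ∑ i, ‖ψ i‖ ^ 2 = 1) : star ψ ⬝ᵥ ψ = 1 := by
    rw [star_dotProduct_self_eq_sum_norm_sq, hψ, RCLike.ofReal_one]
  have upper {ψ : Fin d → ℂ} (hψ : ∑ i, ‖ψ i‖ ^ 2 = 1) :=
    traceNorm_smul_vecMulVec_add_smul_le hE.1 hEtr hlam hle hγ.le hpos.le (hunit hψ)
  refine ⟨fun ψ hψ => upper hψ, fun hΩ => ?_⟩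
  have hθ := hunit hθunit
  have lower := two_mul_sub_re_trace_le_traceNorm hΩ (by rintro rfl; simp at hθ)
    (smul_vecMulVec_add_smul_mulVec_self hθ hθeig _ _)
  rw [re_trace_smul_vecMulVec_add_smul hEtr hθ] at lower
  have heq := le_antisymm (upper hθunit hΩ) (by linarith)
  exact ⟨heq, by rw [heq]; linear_combination (-1 / 2 : ℝ) * hsum⟩

/-- **Region III, conventional illumination.** Let `λ_d` be the smallest eigenvalue of `ρ_E`
with unit eigenvector `θ_d`, let `γ := p₁(1-η) - p₀`, and assume `γ < 0` and
`p₁η + γλ_d > 0`. Then (a) for every unit vector `ψ`,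
`‖p₁η·|ψ⟩⟨ψ| + γ·ρ_E‖₁ ≤ p₁η − γ + 2γλ_d`, and (b) equality holds for `ψ = θ_d`, for which
the Helstrom error `(1 − ‖Ω_c‖₁)/2` equals `p₀ + γ(1 − λ_d)`. -/
theorem region_III_conventional {d : ℕ}
    (ρE : Matrix (Fin d) (Fin d) ℂ) (hE : ρE.PosSemidef) (hEtr : ρE.trace = 1)
    (lamD : ℝ) (hle : ∀ i, lamD ≤ hE.1.eigenvalues i)
    (hmem : ∃ i, hE.1.eigenvalues i = lamD)
    (θd : Fin d → ℂ) (hθunit : ∑ i, ‖θd i‖ ^ 2 = 1)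
    (hθeig : ρE.mulVec θd = (lamD : ℂ) • θd)
    (p₀ p₁ η : ℝ) (hp₀ : 0 ≤ p₀) (hp₁ : 0 ≤ p₁) (hsum : p₀ + p₁ = 1)
    (hη₀ : 0 ≤ η) (hη₁ : η ≤ 1)
    (hγ : p₁ * (1 - η) - p₀ < 0)
    (hpos : 0 < p₁ * η + (p₁ * (1 - η) - p₀) * lamD) :
    (∀ ψ : Fin d → ℂ, ∑ i, ‖ψ i‖ ^ 2 = 1 →
      ∀ hΩ : ((p₁ * η) • vecMulVec ψ (star ψ) + (p₁ * (1 - η) - p₀) • ρE).IsHermitian,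
        traceNorm hΩ ≤ p₁ * η - (p₁ * (1 - η) - p₀) + 2 * (p₁ * (1 - η) - p₀) * lamD) ∧
    (∀ hΩ : ((p₁ * η) • vecMulVec θd (star θd) + (p₁ * (1 - η) - p₀) • ρE).IsHermitian,
        traceNorm hΩ = p₁ * η - (p₁ * (1 - η) - p₀) + 2 * (p₁ * (1 - η) - p₀) * lamD ∧
        (1 - traceNorm hΩ) / 2 = p₀ + (p₁ * (1 - η) - p₀) * (1 - lamD)) :=
  region_III_conventional_general ρE hE hEtr lamD hle hmem θd hθunit hθeig p₀ p₁ η hsum hγ hpos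
end

section
/- Let ρ_E be a positive definite d×d density matrix with eigenvalues λ₁,…,λ_d > 0, let λ_h := (Σ_{i=1}^d λ_i^{-1})^{-1}, and let α ≥ 0. Then for every unit vector ψ ∈ ℂ^d ⊗ ℂ^d with reduced state ρ_B on the second factor, every eigenvalue of the Hermitian matrix ρ_E ⊗ ρ_B − α·|ψ⟩⟨ψ| is at least min(0, λ_h − α); in particular the matrix is positive semidefinite when α ≤ λ_h, and λ_min(ρ_E ⊗ ρ_B − α|ψ⟩⟨ψ|) ≥ λ_h − α when α > λ_h. -/
open Matrix BigOperators Kronecker ComplexOrder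

/-!
Write `ψ = vec Ψ` and `x = vec X`. Then `ρ_B = Ψ Ψᴴ`, `⟨ψ, x⟩ = tr W` and
`⟨x, (ρ_E ⊗ ρ_B) x⟩ = tr (W ρ_Eᵀ Wᴴ)` with `W = Ψᴴ X`, so Cauchy–Schwarz for the inner product
`⟪X, Y⟫ = tr (Y ρ_Eᵀ Xᴴ)`, applied to `ρ_Eᵀ⁻¹` and `W`, gives
`|⟨ψ, x⟩|² ≤ tr ρ_E⁻¹ · ⟨x, (ρ_E ⊗ ρ_B) x⟩`, where `tr ρ_E⁻¹ = Σ λᵢ⁻¹ = λ_h⁻¹`.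
Together with `|⟨ψ, x⟩|² ≤ ‖x‖²` this bounds the quadratic form of
`ρ_E ⊗ ρ_B − α |ψ⟩⟨ψ|` below by `min (0, λ_h − α) ‖x‖²`, hence every eigenvalue too.
-/

namespace Matrix

variable {𝕜 m n : Type*} [RCLike 𝕜] [Fintype n]

theorem norm_star_dotProduct_sq_le (x y : n → 𝕜) :
    ‖star x ⬝ᵥ y‖ ^ 2 ≤ (∑ i, ‖x i‖ ^ 2) * ∑ i, ‖y i‖ ^ 2 := by
  have h := norm_inner_le_norm (𝕜 := 𝕜) (WithLp.toLp 2 x) (WithLp.toLp 2 y)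
  rw [EuclideanSpace.inner_toLp_toLp, dotProduct_comm] at h
  rw [← EuclideanSpace.norm_sq_eq, ← EuclideanSpace.norm_sq_eq, ← mul_pow]
  exact pow_le_pow_left₀ (norm_nonneg _) h 2

theorem star_dotProduct_vecMulVec_mulVec (ψ x : n → 𝕜) :
    star x ⬝ᵥ vecMulVec ψ (star ψ) *ᵥ x = ((‖star ψ ⬝ᵥ x‖ ^ 2 : ℝ) : 𝕜) := by
  rw [vecMulVec_mulVec, dotProduct_smul, op_smul_eq_mul, star_dotProduct, RCLike.star_def,
    RCLike.conj_mul]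
  norm_cast

theorem IsHermitian.le_eigenvalues [DecidableEq n] {M : Matrix n n 𝕜} (hM : M.IsHermitian)
    {c : ℝ} (h : ∀ x, c * ∑ i, ‖x i‖ ^ 2 ≤ RCLike.re (star x ⬝ᵥ M *ᵥ x)) (i : n) :
    c ≤ hM.eigenvalues i := by
  have hv := h (hM.eigenvectorBasis i)
  rwa [← EuclideanSpace.norm_sq_eq, hM.eigenvectorBasis.orthonormal.1 i, one_pow, mul_one,
    ← hM.eigenvalues_eq] at hv

open Unitary in
theorem IsHermitian.trace_inv [DecidableEq n] {A : Matrix n n 𝕜} (hA : A.IsHermitian)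
    (h0 : ∀ i, hA.eigenvalues i ≠ 0) :
    A⁻¹.trace = ∑ i, ((hA.eigenvalues i)⁻¹ : 𝕜) := by
  have hspec := hA.spectral_theorem
  set U := hA.eigenvectorUnitary
  set μ := hA.eigenvalues
  have hinv : A⁻¹ = conjStarAlgAut 𝕜 _ U (diagonal (RCLike.ofReal ∘ (·⁻¹) ∘ μ)) := by
    refine inv_eq_left_inv ?_
    have hμ i : ((μ i)⁻¹ : 𝕜) * μ i = 1 := inv_mul_cancel₀ (by exact_mod_cast h0 i)
    rw [hspec, ← map_mul, diagonal_mul_diagonal]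
    simp only [Function.comp_apply, RCLike.ofReal_inv, hμ, diagonal_one, map_one]
  rw [hinv, conjStarAlgAut_apply, trace_mul_cycle, Unitary.coe_star_mul_self, Matrix.one_mul,
    trace_diagonal]
  simp

/-- Cauchy–Schwarz for the inner product `⟪X, Y⟫ = tr (Y A Xᴴ)`, applied to `A⁻¹` and `W`. -/
theorem PosDef.norm_trace_sq_le [DecidableEq n] {A : Matrix n n 𝕜} (hA : A.PosDef)
    (W : Matrix n n 𝕜) :
    ‖W.trace‖ ^ 2 ≤ RCLike.re A⁻¹.trace * RCLike.re (W * A * Wᴴ).trace := by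
  let := A.toMatrixSeminormedAddCommGroup hA.posSemidef
  let := A.toMatrixInnerProductSpace hA.posSemidef
  have h := inner_mul_inner_self_le (𝕜 := 𝕜) A⁻¹ W
  change ‖(W * A * A⁻¹ᴴ).trace‖ * ‖(A⁻¹ * A * Wᴴ).trace‖ ≤
    RCLike.re (A⁻¹ * A * A⁻¹ᴴ).trace * RCLike.re (W * A * Wᴴ).trace at h
  have hA' : IsUnit A.det := hA.isUnit.map detMonoidHom
  rwa [hA.inv.1, Matrix.mul_assoc, mul_nonsing_inv _ hA', Matrix.mul_one,
    nonsing_inv_mul _ hA', Matrix.one_mul, Matrix.one_mul, trace_conjTranspose, norm_star,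
    ← sq] at h

def reducedState (ψ : n × m → 𝕜) : Matrix m m 𝕜 :=
  of fun k l => ∑ i, ψ (i, k) * star (ψ (i, l))

theorem reducedState_vec (Ψ : Matrix m n 𝕜) : reducedState (vec Ψ) = Ψ * Ψᴴ := by
  ext k l
  simp [reducedState, mul_apply]

variable [Fintype m]

theorem posSemidef_reducedState (ψ : n × m → 𝕜) : (reducedState ψ).PosSemidef := by
  obtain ⟨Ψ, rfl⟩ := vec_bijective.surjective ψ
  rw [reducedState_vec]
  exact posSemidef_self_mul_conjTranspose Ψ

theorem star_vec_dotProduct_kronecker_mulVec_vec (X : Matrix m n 𝕜) (B : Matrix n n 𝕜)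
    (C : Matrix m m 𝕜) :
    star (vec X) ⬝ᵥ (B ⊗ₖ C) *ᵥ vec X = (Xᴴ * C * X * Bᵀ).trace := by
  rw [kronecker_mulVec_vec, star_vec_dotProduct_vec, Matrix.mul_assoc, Matrix.mul_assoc,
    Matrix.mul_assoc]

theorem PosDef.norm_star_dotProduct_sq_le_kronecker [DecidableEq n] {A : Matrix n n 𝕜}
    (hA : A.PosDef) (ψ x : n × m → 𝕜) :
    ‖star ψ ⬝ᵥ x‖ ^ 2 ≤
      RCLike.re A⁻¹.trace * RCLike.re (star x ⬝ᵥ (A ⊗ₖ reducedState ψ) *ᵥ x) := by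
  obtain ⟨Ψ, rfl⟩ := vec_bijective.surjective ψ
  obtain ⟨X, rfl⟩ := vec_bijective.surjective x
  rw [reducedState_vec, star_vec_dotProduct_kronecker_mulVec_vec, star_vec_dotProduct_vec]
  have h := hA.transpose.norm_trace_sq_le (Ψᴴ * X)
  rw [← transpose_nonsing_inv, trace_transpose, trace_mul_cycle, conjTranspose_mul,
    conjTranspose_conjTranspose] at h
  simpa only [Matrix.mul_assoc] using h

theorem PosDef.min_mul_le_re_dotProduct_kronecker_sub_vecMulVec [DecidableEq n]
    {A : Matrix n n 𝕜} (hA : A.PosDef) {ψ : n × m → 𝕜} (hψ : ∑ p, ‖ψ p‖ ^ 2 = 1) (α : ℝ)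
    (x : n × m → 𝕜) :
    min 0 ((RCLike.re A⁻¹.trace)⁻¹ - α) * ∑ p, ‖x p‖ ^ 2 ≤
      RCLike.re (star x ⬝ᵥ (A ⊗ₖ reducedState ψ - α • vecMulVec ψ (star ψ)) *ᵥ x) := by
  set s := ‖star ψ ⬝ᵥ x‖ ^ 2
  set q := RCLike.re (star x ⬝ᵥ (A ⊗ₖ reducedState ψ) *ᵥ x)
  have hq : (RCLike.re A⁻¹.trace)⁻¹ * s ≤ q :=
    inv_mul_le_of_le_mul₀ (RCLike.nonneg_iff.mp hA.inv.posSemidef.trace_nonneg).1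
      ((hA.posSemidef.kronecker (posSemidef_reducedState ψ)).re_dotProduct_nonneg x)
      (hA.norm_star_dotProduct_sq_le_kronecker ψ x)
  have hs : s ≤ ∑ p, ‖x p‖ ^ 2 := by
    simpa only [hψ, one_mul] using norm_star_dotProduct_sq_le ψ x
  have hform : RCLike.re (star x ⬝ᵥ (A ⊗ₖ reducedState ψ - α • vecMulVec ψ (star ψ)) *ᵥ x) =
      q - α * s := by
    rw [sub_mulVec, dotProduct_sub, smul_mulVec, dotProduct_smul,
      star_dotProduct_vecMulVec_mulVec, map_sub, RCLike.real_smul_ofReal, RCLike.re_ofReal_mul,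
      RCLike.ofReal_re]
  have hs0 : 0 ≤ s := by positivity
  rw [hform]
  rcases le_total α (RCLike.re A⁻¹.trace)⁻¹ with hα | hα
  · rw [min_eq_left (sub_nonneg.mpr hα), zero_mul]
    linarith [mul_le_mul_of_nonneg_right hα hs0]
  · rw [min_eq_right (sub_nonpos.mpr hα)]
    linarith [mul_le_mul_of_nonpos_left hs (sub_nonpos.mpr hα)]

end Matrix

theorem quantum_eigenvalue_lower_bound_general {d : ℕ}
    (ρE : Matrix (Fin d) (Fin d) ℂ) (hE : ρE.PosDef)
    (lamH : ℝ) (hlamH : lamH = (∑ i, (hE.1.eigenvalues i)⁻¹)⁻¹)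
    (α : ℝ)
    (ψ : Fin d × Fin d → ℂ) (hψ : ∑ p, ‖ψ p‖ ^ 2 = 1)
    (ρB : Matrix (Fin d) (Fin d) ℂ)
    (hρB : ρB = Matrix.of fun k l => ∑ i, ψ (i, k) * star (ψ (i, l)))
    (hM : (ρE ⊗ₖ ρB - α • vecMulVec ψ (star ψ)).IsHermitian) :
    (∀ i, min 0 (lamH - α) ≤ hM.eigenvalues i) ∧
      (α ≤ lamH → (ρE ⊗ₖ ρB - α • vecMulVec ψ (star ψ)).PosSemidef) ∧
      (lamH < α → ∀ i, lamH - α ≤ hM.eigenvalues i) := by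
  subst hρB
  have hlamH_trace : lamH = (RCLike.re ρE⁻¹.trace)⁻¹ := by
    rw [hlamH, hE.1.trace_inv fun i => (hE.eigenvalues_pos i).ne']
    simp
  have heig : ∀ i, min 0 (lamH - α) ≤ hM.eigenvalues i :=
    hM.le_eigenvalues fun x => hlamH_trace ▸
      hE.min_mul_le_re_dotProduct_kronecker_sub_vecMulVec hψ α x
  refine ⟨heig, fun hle => hM.posSemidef_iff_eigenvalues_nonneg.mpr fun i => ?_,
    fun hlt i => ?_⟩
  · simpa [min_eq_left (sub_nonneg.mpr hle)] using heig i
  · simpa [min_eq_right (sub_nonpos.mpr hlt.le)] using heig i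

/-- **Eigenvalue lower bound for the quantum-illumination matrix.** Let `ρ_E` be a positive
definite `d×d` density matrix with eigenvalues `λ₁,…,λ_d > 0`, let
`λ_h := (Σᵢ λᵢ⁻¹)⁻¹`, and let `α ≥ 0`. For every unit vector `ψ ∈ ℂ^d ⊗ ℂ^d` with reduced
state `ρ_B` on the second factor, every eigenvalue of `ρ_E ⊗ ρ_B − α|ψ⟩⟨ψ|` is at least
`min(0, λ_h − α)`; in particular the matrix is positive semidefinite when `α ≤ λ_h`, and
all its eigenvalues are at least `λ_h − α` when `α > λ_h`. -/
theorem quantum_eigenvalue_lower_bound {d : ℕ}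
    (ρE : Matrix (Fin d) (Fin d) ℂ) (hE : ρE.PosDef) (hEtr : ρE.trace = 1)
    (lamH : ℝ) (hlamH : lamH = (∑ i, (hE.1.eigenvalues i)⁻¹)⁻¹)
    (α : ℝ) (hα : 0 ≤ α)
    (ψ : Fin d × Fin d → ℂ) (hψ : ∑ p, ‖ψ p‖ ^ 2 = 1)
    (ρB : Matrix (Fin d) (Fin d) ℂ)
    (hρB : ρB = Matrix.of fun k l => ∑ i, ψ (i, k) * star (ψ (i, l)))
    (hM : (ρE ⊗ₖ ρB - α • vecMulVec ψ (star ψ)).IsHermitian) :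
    (∀ i, min 0 (lamH - α) ≤ hM.eigenvalues i) ∧
      (α ≤ lamH → (ρE ⊗ₖ ρB - α • vecMulVec ψ (star ψ)).PosSemidef) ∧
      (lamH < α → ∀ i, lamH - α ≤ hM.eigenvalues i) :=
  quantum_eigenvalue_lower_bound_general ρE hE lamH hlamH α ψ hψ ρB hρB hM
end

section
/- Let ρ_E be a positive definite d×d density matrix with eigenvalues λ₁,…,λ_d > 0 and orthonormal eigenvectors θ₁,…,θ_d, and let λ_h := (Σ_{i=1}^d λ_i^{-1})^{-1}. Define ψ_h := Σ_{i=1}^d √(λ_h/λ_i) · θ_i ⊗ θ_i ∈ ℂ^d ⊗ ℂ^d. Then: (a) ψ_h is a unit vector; (b) the reduced state of ψ_h on the second factor is ρ_B = Σ_{i=1}^d (λ_h/λ_i)·|θ_i⟩⟨θ_i|; (c) ψ_h is an eigenvector of ρ_E ⊗ ρ_B with eigenvalue λ_h, so for every α, ψ_h is an eigenvector of ρ_E ⊗ ρ_B − α·|ψ_h⟩⟨ψ_h| with eigenvalue λ_h − α; in particular ⟨ψ_h|(ρ_E ⊗ ρ_B)|ψ_h⟩ = λ_h. -/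
open Matrix BigOperators Kronecker ComplexOrder

/-- **The optimal entangled state.** Let `ρ_E` be a positive definite `d×d` density matrix
with eigenvalues `λ₁,…,λ_d > 0` and orthonormal eigenvectors `θ₁,…,θ_d`, and let
`λ_h := (Σᵢ λᵢ⁻¹)⁻¹`.  Define `ψ_h := Σᵢ √(λ_h/λᵢ)·θᵢ ⊗ θᵢ`.  Then (a) `ψ_h` is a unit
vector; (b) its reduced state on the second factor is `ρ_B = Σᵢ (λ_h/λᵢ)|θᵢ⟩⟨θᵢ|`;
(c) `ψ_h` is an eigenvector of `ρ_E ⊗ ρ_B` with eigenvalue `λ_h`, hence for every `α`,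
`ψ_h` is an eigenvector of `ρ_E ⊗ ρ_B − α|ψ_h⟩⟨ψ_h|` with eigenvalue `λ_h − α`; in
particular `⟨ψ_h|(ρ_E ⊗ ρ_B)|ψ_h⟩ = λ_h`. -/
theorem optimal_state_quantum_illumination {d : ℕ}
    (ρE : Matrix (Fin d) (Fin d) ℂ) (hE : ρE.PosDef) (hEtr : ρE.trace = 1)
    (lam : Fin d → ℝ) (hlam : ∀ i, 0 < lam i)
    (θ : Fin d → Fin d → ℂ)
    (hortho : ∀ i j, star (θ i) ⬝ᵥ θ j = if i = j then 1 else 0)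
    (heig : ∀ i, ρE.mulVec (θ i) = (lam i : ℂ) • θ i)
    (lamH : ℝ) (hlamH : lamH = (∑ i, (lam i)⁻¹)⁻¹)
    (ψh : Fin d × Fin d → ℂ)
    (hψh : ψh = fun p => ∑ i, (Real.sqrt (lamH / lam i) : ℂ) * θ i p.1 * θ i p.2)
    (ρB : Matrix (Fin d) (Fin d) ℂ)
    (hρB : ρB = Matrix.of fun k l => ∑ i, ψh (i, k) * star (ψh (i, l))) :
    (∑ p, ‖ψh p‖ ^ 2 = 1) ∧
      (ρB = Matrix.of fun k l => ∑ i, ((lamH / lam i : ℝ) : ℂ) * θ i k * star (θ i l)) ∧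
      ((ρE ⊗ₖ ρB).mulVec ψh = (lamH : ℂ) • ψh) ∧
      (∀ α : ℝ,
        (ρE ⊗ₖ ρB - α • vecMulVec ψh (star ψh)).mulVec ψh = ((lamH - α : ℝ) : ℂ) • ψh) ∧
      (star ψh ⬝ᵥ (ρE ⊗ₖ ρB).mulVec ψh = (lamH : ℂ)) := by
  -- d > 0 and basic positivity
  have hd : 0 < d := by
    rcases Nat.eq_zero_or_pos d with h | h
    · subst h; simp [Matrix.trace] at hEtr
    · exact h
  haveI : Nonempty (Fin d) := Fin.pos_iff_nonempty.mp hd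
  have hsum_pos : 0 < ∑ i, (lam i)⁻¹ :=
    Finset.sum_pos (fun i _ => inv_pos.mpr (hlam i)) Finset.univ_nonempty
  have hlamH_pos : 0 < lamH := by rw [hlamH]; exact inv_pos.mpr hsum_pos
  have hcsq : ∀ i : Fin d,
      (Real.sqrt (lamH / lam i) : ℂ) * (Real.sqrt (lamH / lam i) : ℂ)
        = ((lamH / lam i : ℝ) : ℂ) := by
    intro i
    rw [← Complex.ofReal_mul,
      Real.mul_self_sqrt (div_nonneg hlamH_pos.le (hlam i).le)]
  -- orthonormality rewritten
  have key : ∀ i j, (∑ k, θ i k * (starRingEnd ℂ) (θ j k)) = if i = j then 1 else 0 := by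
    intro i j
    have h := hortho j i
    simp only [dotProduct, Pi.star_apply, Complex.star_def] at h
    rw [show (∑ k, θ i k * (starRingEnd ℂ) (θ j k))
        = ∑ k, (starRingEnd ℂ) (θ j k) * θ i k from
      Finset.sum_congr rfl fun k _ => mul_comm _ _, h]
    simp [eq_comm]
  have key' : ∀ i j, (∑ k, (starRingEnd ℂ) (θ i k) * θ j k) = if i = j then 1 else 0 := by
    intro i j
    have h := hortho i j
    simpa [dotProduct, Pi.star_apply, Complex.star_def] using h
  -- inner products of product vectors
  have hinner : ∀ a b : Fin d,
      (∑ p : Fin d × Fin d, (θ a p.1 * θ a p.2) *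
        ((starRingEnd ℂ) (θ b p.1) * (starRingEnd ℂ) (θ b p.2)))
        = if a = b then 1 else 0 := by
    intro a b
    rw [Fintype.sum_prod_type]
    calc ∑ x, ∑ y, (θ a x * θ a y) * ((starRingEnd ℂ) (θ b x) * (starRingEnd ℂ) (θ b y))
        = ∑ x, (θ a x * (starRingEnd ℂ) (θ b x)) * ∑ y, θ a y * (starRingEnd ℂ) (θ b y) := by
          refine Finset.sum_congr rfl fun x _ => ?_
          rw [Finset.mul_sum]
          exact Finset.sum_congr rfl fun y _ => by ring
      _ = (∑ x, θ a x * (starRingEnd ℂ) (θ b x)) * ∑ y, θ a y * (starRingEnd ℂ) (θ b y) :=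
          (Finset.sum_mul _ _ _).symm
      _ = if a = b then 1 else 0 := by
          rw [key]
          by_cases h : a = b <;> simp [h]
  -- normalization, complex version
  have haC : ∑ p : Fin d × Fin d, ψh p * (starRingEnd ℂ) (ψh p) = 1 := by
    simp only [hψh]
    calc ∑ p : Fin d × Fin d,
          (∑ a, (Real.sqrt (lamH / lam a) : ℂ) * θ a p.1 * θ a p.2) *
            (starRingEnd ℂ) (∑ b, (Real.sqrt (lamH / lam b) : ℂ) * θ b p.1 * θ b p.2)
        = ∑ p : Fin d × Fin d, ∑ a, ∑ b,
            ((Real.sqrt (lamH / lam a) : ℂ) * (Real.sqrt (lamH / lam b) : ℂ)) *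
              ((θ a p.1 * θ a p.2) * ((starRingEnd ℂ) (θ b p.1) * (starRingEnd ℂ) (θ b p.2))) := by
          refine Finset.sum_congr rfl fun p _ => ?_
          rw [map_sum, Finset.sum_mul]
          refine Finset.sum_congr rfl fun a _ => ?_
          rw [Finset.mul_sum]
          refine Finset.sum_congr rfl fun b _ => ?_
          simp only [_root_.map_mul, Complex.conj_ofReal]
          ring
      _ = ∑ a, ∑ b,
            ((Real.sqrt (lamH / lam a) : ℂ) * (Real.sqrt (lamH / lam b) : ℂ)) *
              ∑ p : Fin d × Fin d,
                (θ a p.1 * θ a p.2) * ((starRingEnd ℂ) (θ b p.1) * (starRingEnd ℂ) (θ b p.2)) := by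
          rw [Finset.sum_comm]
          refine Finset.sum_congr rfl fun a _ => ?_
          rw [Finset.sum_comm]
          exact Finset.sum_congr rfl fun b _ => (Finset.mul_sum _ _ _).symm
      _ = ∑ a, ((lamH / lam a : ℝ) : ℂ) := by
          refine Finset.sum_congr rfl fun a _ => ?_
          rw [Finset.sum_eq_single a]
          · rw [hinner, if_pos rfl, mul_one, hcsq]
          · intro b _ hb
            rw [hinner, if_neg fun h => hb h.symm, mul_zero]
          · exact fun h => absurd (Finset.mem_univ a) h
      _ = 1 := by
          rw [← Complex.ofReal_sum]
          norm_cast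
          rw [hlamH]
          have : ∀ a ∈ Finset.univ, (∑ i, (lam i)⁻¹)⁻¹ / lam a
              = (∑ i, (lam i)⁻¹)⁻¹ * (lam a)⁻¹ := fun a _ => div_eq_mul_inv _ _
          rw [Finset.sum_congr rfl this, ← Finset.mul_sum,
            inv_mul_cancel₀ hsum_pos.ne']
  -- (a)
  have ha : ∑ p, ‖ψh p‖ ^ 2 = 1 := by
    have h2 : ((∑ p, ‖ψh p‖ ^ 2 : ℝ) : ℂ) = 1 := by
      push_cast
      calc (∑ p, (‖ψh p‖ : ℂ) ^ 2) = ∑ p, ψh p * (starRingEnd ℂ) (ψh p) :=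
            Finset.sum_congr rfl fun p _ => (Complex.mul_conj' (ψh p)).symm
        _ = 1 := haC
    exact_mod_cast h2
  -- (b)
  have hb : ρB = Matrix.of fun k l => ∑ i, ((lamH / lam i : ℝ) : ℂ) * θ i k * star (θ i l) := by
    rw [hρB]
    ext k l
    simp only [Matrix.of_apply, hψh, Complex.star_def, map_sum, _root_.map_mul,
      Complex.conj_ofReal]
    calc ∑ i, (∑ a, (Real.sqrt (lamH / lam a) : ℂ) * θ a i * θ a k) *
          ∑ b, (Real.sqrt (lamH / lam b) : ℂ) * (starRingEnd ℂ) (θ b i) * (starRingEnd ℂ) (θ b l)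
        = ∑ i, ∑ a, ∑ b,
            ((Real.sqrt (lamH / lam a) : ℂ) * (Real.sqrt (lamH / lam b) : ℂ) *
              θ a k * (starRingEnd ℂ) (θ b l)) * (θ a i * (starRingEnd ℂ) (θ b i)) := by
          refine Finset.sum_congr rfl fun i _ => ?_
          rw [Finset.sum_mul]
          refine Finset.sum_congr rfl fun a _ => ?_
          rw [Finset.mul_sum]
          exact Finset.sum_congr rfl fun b _ => by ring
      _ = ∑ a, ∑ b,
            ((Real.sqrt (lamH / lam a) : ℂ) * (Real.sqrt (lamH / lam b) : ℂ) *
              θ a k * (starRingEnd ℂ) (θ b l)) * ∑ i, θ a i * (starRingEnd ℂ) (θ b i) := by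
          rw [Finset.sum_comm]
          refine Finset.sum_congr rfl fun a _ => ?_
          rw [Finset.sum_comm]
          exact Finset.sum_congr rfl fun b _ => (Finset.mul_sum _ _ _).symm
      _ = ∑ a, ((lamH / lam a : ℝ) : ℂ) * θ a k * (starRingEnd ℂ) (θ a l) := by
          refine Finset.sum_congr rfl fun a _ => ?_
          rw [Finset.sum_eq_single a]
          · rw [key, if_pos rfl, mul_one, hcsq]
          · intro b _ hbne
            rw [key, if_neg fun h => hbne h.symm, mul_zero]
          · exact fun h => absurd (Finset.mem_univ a) h
  -- ρB acts on the eigenvectors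
  have hρBθ : ∀ a k, (∑ l, ρB k l * θ a l) = ((lamH / lam a : ℝ) : ℂ) * θ a k := by
    intro a k
    rw [hb]
    simp only [Matrix.of_apply, Complex.star_def]
    calc ∑ l, (∑ b, ((lamH / lam b : ℝ) : ℂ) * θ b k * (starRingEnd ℂ) (θ b l)) * θ a l
        = ∑ l, ∑ b, (((lamH / lam b : ℝ) : ℂ) * θ b k) * ((starRingEnd ℂ) (θ b l) * θ a l) := by
          refine Finset.sum_congr rfl fun l _ => ?_
          rw [Finset.sum_mul]
          exact Finset.sum_congr rfl fun b _ => by ring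
      _ = ∑ b, (((lamH / lam b : ℝ) : ℂ) * θ b k) * ∑ l, (starRingEnd ℂ) (θ b l) * θ a l := by
          rw [Finset.sum_comm]
          exact Finset.sum_congr rfl fun b _ => (Finset.mul_sum _ _ _).symm
      _ = ((lamH / lam a : ℝ) : ℂ) * θ a k := by
          rw [Finset.sum_eq_single a]
          · rw [key', if_pos rfl, mul_one]
          · intro b _ hbne
            rw [key', if_neg hbne, mul_zero]
          · exact fun h => absurd (Finset.mem_univ a) h
  have hρEθ : ∀ a i, (∑ j, ρE i j * θ a j) = (lam a : ℂ) * θ a i := by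
    intro a i
    have h := congrFun (heig a) i
    simpa [Matrix.mulVec, dotProduct] using h
  -- (c)
  have hc3 : (ρE ⊗ₖ ρB).mulVec ψh = (lamH : ℂ) • ψh := by
    funext p
    obtain ⟨i, k⟩ := p
    simp only [Matrix.mulVec, dotProduct, Pi.smul_apply, smul_eq_mul]
    rw [Fintype.sum_prod_type]
    simp only [kroneckerMap_apply, hψh]
    calc ∑ j, ∑ l, ρE i j * ρB k l * ∑ a, (Real.sqrt (lamH / lam a) : ℂ) * θ a j * θ a l
        = ∑ j, ∑ l, ∑ a, (Real.sqrt (lamH / lam a) : ℂ) *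
            ((ρE i j * θ a j) * (ρB k l * θ a l)) := by
          refine Finset.sum_congr rfl fun j _ => Finset.sum_congr rfl fun l _ => ?_
          rw [Finset.mul_sum]
          exact Finset.sum_congr rfl fun a _ => by ring
      _ = ∑ a, ∑ j, ∑ l, (Real.sqrt (lamH / lam a) : ℂ) *
            ((ρE i j * θ a j) * (ρB k l * θ a l)) := by
          calc ∑ j, ∑ l, ∑ a, (Real.sqrt (lamH / lam a) : ℂ) *
                ((ρE i j * θ a j) * (ρB k l * θ a l))
              = ∑ j, ∑ a, ∑ l, (Real.sqrt (lamH / lam a) : ℂ) *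
                ((ρE i j * θ a j) * (ρB k l * θ a l)) :=
                Finset.sum_congr rfl fun j _ => Finset.sum_comm
            _ = ∑ a, ∑ j, ∑ l, (Real.sqrt (lamH / lam a) : ℂ) *
                ((ρE i j * θ a j) * (ρB k l * θ a l)) := Finset.sum_comm
      _ = ∑ a, (Real.sqrt (lamH / lam a) : ℂ) *
            ((∑ j, ρE i j * θ a j) * ∑ l, ρB k l * θ a l) := by
          refine Finset.sum_congr rfl fun a _ => ?_
          rw [Finset.sum_mul_sum, Finset.mul_sum]
          refine Finset.sum_congr rfl fun j _ => ?_
          rw [Finset.mul_sum]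
      _ = ∑ a, (Real.sqrt (lamH / lam a) : ℂ) *
            (((lam a : ℂ) * θ a i) * (((lamH / lam a : ℝ) : ℂ) * θ a k)) := by
          refine Finset.sum_congr rfl fun a _ => ?_
          rw [hρEθ, hρBθ]
      _ = ∑ a, (lamH : ℂ) * ((Real.sqrt (lamH / lam a) : ℂ) * θ a i * θ a k) := by
          refine Finset.sum_congr rfl fun a _ => ?_
          have hla : (lam a : ℂ) * ((lamH / lam a : ℝ) : ℂ) = (lamH : ℂ) := by
            rw [← Complex.ofReal_mul]
            congr 1
            rw [mul_comm, div_mul_cancel₀ _ (hlam a).ne']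
          calc (Real.sqrt (lamH / lam a) : ℂ) *
                (((lam a : ℂ) * θ a i) * (((lamH / lam a : ℝ) : ℂ) * θ a k))
              = ((lam a : ℂ) * ((lamH / lam a : ℝ) : ℂ)) *
                ((Real.sqrt (lamH / lam a) : ℂ) * θ a i * θ a k) := by ring
            _ = (lamH : ℂ) * ((Real.sqrt (lamH / lam a) : ℂ) * θ a i * θ a k) := by rw [hla]
      _ = (lamH : ℂ) * ∑ a, (Real.sqrt (lamH / lam a) : ℂ) * θ a i * θ a k :=
          (Finset.mul_sum _ _ _).symm
  -- dot products
  have hdot : star ψh ⬝ᵥ ψh = 1 := by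
    calc star ψh ⬝ᵥ ψh = ∑ p, ψh p * (starRingEnd ℂ) (ψh p) := by
          simp only [dotProduct, Pi.star_apply, Complex.star_def]
          exact Finset.sum_congr rfl fun p _ => mul_comm _ _
      _ = 1 := haC
  -- (d)
  have hd4 : ∀ α : ℝ,
      (ρE ⊗ₖ ρB - α • vecMulVec ψh (star ψh)).mulVec ψh = ((lamH - α : ℝ) : ℂ) • ψh := by
    intro α
    have hvv : (α • vecMulVec ψh (star ψh)).mulVec ψh = (α : ℂ) • ψh := by
      funext x
      simp only [Matrix.mulVec, dotProduct, Matrix.smul_apply, vecMulVec_apply,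
        Pi.star_apply, Pi.smul_apply]
      calc ∑ y, α • (ψh x * star (ψh y)) * ψh y
          = α • (ψh x * ∑ y, star (ψh y) * ψh y) := by
            rw [Finset.mul_sum, Finset.smul_sum]
            exact Finset.sum_congr rfl fun y _ => by
              simp only [Complex.real_smul]
              ring
        _ = (α : ℂ) • ψh x := by
            have : (∑ y, star (ψh y) * ψh y) = (1 : ℂ) := by
              simpa [dotProduct, Pi.star_apply] using hdot
            rw [this, mul_one]
            simp [Complex.real_smul]
    rw [Matrix.sub_mulVec, hc3, hvv]
    funext x
    simp only [Pi.sub_apply, Pi.smul_apply, smul_eq_mul, Complex.ofReal_sub]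
    ring
  refine ⟨ha, hb, hc3, hd4, ?_⟩
  -- (e)
  rw [hc3, dotProduct_smul, hdot, smul_eq_mul, mul_one]
end

section
/- Let ρ and ρ₀ be d×d complex density matrices, let p₀, p₁ ≥ 0 with p₀ + p₁ = 1, and for η ∈ [0,1] set ρ₁(η) := η·ρ + (1−η)·ρ₀. If 0 ≤ η' ≤ η ≤ 1, then ‖p₁·ρ₁(η') − p₀·ρ₀‖₁ ≤ ‖p₁·ρ₁(η) − p₀·ρ₀‖₁; equivalently, the minimum error P_err(η) = (1 − ‖p₁ρ₁(η) − p₀ρ₀‖₁)/2 is a non-increasing function of the reflectivity η. -/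
/-
The trace norm is convex: a Hermitian `A` splits as `P - Q` with `P, Q ⪰ 0` and
`‖A‖₁ = tr P + tr Q` (positive and negative spectral parts), while any such splitting gives
`‖A‖₁ ≤ tr P + tr Q`. The matrix `M(η) = p₁ρ₁(η) - p₀ρ₀` is affine in `η`, and
`M(0) = (p₁ - p₀)ρ₀` has trace norm `|p₁ - p₀| = |tr M(η)| ≤ ‖M(η)‖₁`, so `η ↦ ‖M(η)‖₁` is
convex on `[0, ∞)` with its minimum at `0`, hence non-decreasing there.
-/

open Matrix BigOperators ComplexOrder

namespace Matrix

variable {n : Type*} [Fintype n] [DecidableEq n]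

lemma IsHermitian.re_trace_eq_sum_eigenvalues {A : Matrix n n ℂ} (hA : A.IsHermitian) :
    A.trace.re = ∑ i, hA.eigenvalues i := by
  simp [hA.trace_eq_sum_eigenvalues]

lemma abs_re_trace_le_traceNorm {A : Matrix n n ℂ} (hA : A.IsHermitian) :
    |A.trace.re| ≤ traceNorm hA := by
  rw [hA.re_trace_eq_sum_eigenvalues]
  exact Finset.abs_sum_le_sum_abs _ _

lemma PosSemidef.traceNorm_eq {A : Matrix n n ℂ} (hA : A.PosSemidef) :
    traceNorm hA.isHermitian = A.trace.re := by
  rw [hA.isHermitian.re_trace_eq_sum_eigenvalues, traceNorm]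
  exact Finset.sum_congr rfl fun i _ => abs_of_nonneg (hA.eigenvalues_nonneg i)

lemma traceNorm_le_of_eq_sub {A P Q : Matrix n n ℂ} (hA : A.IsHermitian)
    (hP : P.PosSemidef) (hQ : Q.PosSemidef) (h : A = P - Q) :
    traceNorm hA ≤ P.trace.re + Q.trace.re := by
  set U : Matrix n n ℂ := (hA.eigenvectorUnitary : Matrix n n ℂ)
  have hdiag : Uᴴ * A * U = diagonal (RCLike.ofReal ∘ hA.eigenvalues) := by
    have := hA.conjStarAlgAut_star_eigenvectorUnitary
    rwa [Unitary.conjStarAlgAut_star_apply, star_eq_conjTranspose] at this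
  have htrace (B : Matrix n n ℂ) : ∑ i, (Uᴴ * B * U).diag i = B.trace := by
    rw [← trace, trace_mul_cycle, ← star_eq_conjTranspose,
      Unitary.mul_star_self_of_mem hA.eigenvectorUnitary.2, one_mul]
  have hre {B : Matrix n n ℂ} (hB : B.PosSemidef) (i : n) : 0 ≤ ((Uᴴ * B * U) i i).re :=
    (Complex.nonneg_iff.mp (hB.conjTranspose_mul_mul_same U).diag_nonneg).1
  have heig (i : n) : hA.eigenvalues i = ((Uᴴ * P * U) i i).re - ((Uᴴ * Q * U) i i).re := by
    simpa [h, mul_sub, sub_mul] using congrArg (fun M => (M i i).re) hdiag.symm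
  calc traceNorm hA = ∑ i, |((Uᴴ * P * U) i i).re - ((Uᴴ * Q * U) i i).re| := by
        simp only [traceNorm, heig]
    _ ≤ ∑ i, (((Uᴴ * P * U) i i).re + ((Uᴴ * Q * U) i i).re) := by
        gcongr with i
        have := hre hP i
        have := hre hQ i
        exact abs_sub_le_iff.2 ⟨by linarith, by linarith⟩
    _ = P.trace.re + Q.trace.re := by
        rw [Finset.sum_add_distrib, ← htrace P, ← htrace Q, Complex.re_sum, Complex.re_sum]
        rfl

lemma IsHermitian.exists_posSemidef_sub_eq {A : Matrix n n ℂ} (hA : A.IsHermitian) :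
    ∃ P Q : Matrix n n ℂ, P.PosSemidef ∧ Q.PosSemidef ∧ A = P - Q ∧
      P.trace.re + Q.trace.re = traceNorm hA := by
  set U : Matrix n n ℂ := (hA.eigenvectorUnitary : Matrix n n ℂ)
  let conj (f : n → ℝ) : Matrix n n ℂ := U * diagonal (fun i => (f i : ℂ)) * Uᴴ
  have conj_posSemidef (f : n → ℝ) (hf : ∀ i, 0 ≤ f i) : (conj f).PosSemidef :=
    (posSemidef_diagonal_iff.mpr fun i => Complex.zero_le_real.mpr (hf i)).mul_mul_conjTranspose_same
      U
  have re_trace_conj (f : n → ℝ) : (conj f).trace.re = ∑ i, f i := by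
    rw [trace_mul_cycle, ← star_eq_conjTranspose,
      Unitary.star_mul_self_of_mem hA.eigenvectorUnitary.2, one_mul, trace_diagonal,
      ← Complex.ofReal_sum, Complex.ofReal_re]
  have hA_eq : A = conj hA.eigenvalues := by
    conv_lhs => rw [hA.spectral_theorem, Unitary.conjStarAlgAut_apply, star_eq_conjTranspose]
    rfl
  refine ⟨conj fun i => (hA.eigenvalues i)⁺, conj fun i => (hA.eigenvalues i)⁻,
    conj_posSemidef _ fun i => posPart_nonneg _, conj_posSemidef _ fun i => negPart_nonneg _,
    ?_, ?_⟩
  · refine hA_eq.trans ?_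
    simp only [conj]
    rw [← sub_mul, ← mul_sub, diagonal_sub]
    simp only [← Complex.ofReal_sub, posPart_sub_negPart]
  · rw [re_trace_conj, re_trace_conj, ← Finset.sum_add_distrib]
    simp only [posPart_add_negPart, traceNorm]

lemma traceNorm_add_le {A B : Matrix n n ℂ} (hA : A.IsHermitian) (hB : B.IsHermitian)
    (hAB : (A + B).IsHermitian) : traceNorm hAB ≤ traceNorm hA + traceNorm hB := by
  obtain ⟨P, Q, hP, hQ, rfl, hPQ⟩ := hA.exists_posSemidef_sub_eq
  obtain ⟨P', Q', hP', hQ', rfl, hPQ'⟩ := hB.exists_posSemidef_sub_eq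
  calc traceNorm hAB ≤ (P + P').trace.re + (Q + Q').trace.re :=
        traceNorm_le_of_eq_sub hAB (hP.add hP') (hQ.add hQ') (by abel)
    _ = traceNorm hA + traceNorm hB := by
        rw [← hPQ, ← hPQ', trace_add, trace_add, Complex.add_re, Complex.add_re]
        ring

lemma traceNorm_smul_le {A : Matrix n n ℂ} (hA : A.IsHermitian) (c : ℝ)
    (hcA : (c • A).IsHermitian) : traceNorm hcA ≤ |c| * traceNorm hA := by
  obtain ⟨P, Q, hP, hQ, rfl, hPQ⟩ := hA.exists_posSemidef_sub_eq
  have hdecomp : c • (P - Q) = (c⁺ • P + c⁻ • Q) - (c⁺ • Q + c⁻ • P) := by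
    conv_lhs => rw [← posPart_sub_negPart c]
    module
  calc traceNorm hcA ≤ (c⁺ • P + c⁻ • Q).trace.re + (c⁺ • Q + c⁻ • P).trace.re :=
        traceNorm_le_of_eq_sub hcA
          ((hP.smul (posPart_nonneg c)).add (hQ.smul (negPart_nonneg c)))
          ((hQ.smul (posPart_nonneg c)).add (hP.smul (negPart_nonneg c))) hdecomp
    _ = (c⁺ + c⁻) * (P.trace.re + Q.trace.re) := by
        simp only [trace_add, trace_smul, Complex.add_re, Complex.real_smul, Complex.re_ofReal_mul]
        ring
    _ = |c| * traceNorm hA := by rw [posPart_add_negPart, hPQ]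

lemma traceNorm_le_of_eq_smul_add_smul {A B C : Matrix n n ℂ} (hA : A.IsHermitian)
    (hB : B.IsHermitian) (hC : C.IsHermitian) {a b : ℝ} (h : C = a • A + b • B) :
    traceNorm hC ≤ |a| * traceNorm hA + |b| * traceNorm hB := by
  subst h
  have haA := hA.smul (.all a)
  have hbB := hB.smul (.all b)
  exact (traceNorm_add_le haA hbB hC).trans
    (add_le_add (traceNorm_smul_le hA a haA) (traceNorm_smul_le hB b hbB))

end Matrix

theorem minimal_error_monotone_general {d : ℕ}
    (ρ ρ₀ : Matrix (Fin d) (Fin d) ℂ)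
    (hρtr : ρ.trace = 1)
    (h₀ : ρ₀.PosSemidef) (h₀tr : ρ₀.trace = 1)
    (p₀ p₁ : ℝ)
    (η η' : ℝ) (hη'0 : 0 ≤ η') (hη'η : η' ≤ η)
    (hM' : (p₁ • (η' • ρ + (1 - η') • ρ₀) - p₀ • ρ₀).IsHermitian)
    (hM : (p₁ • (η • ρ + (1 - η) • ρ₀) - p₀ • ρ₀).IsHermitian) :
    traceNorm hM' ≤ traceNorm hM ∧
      (1 - traceNorm hM) / 2 ≤ (1 - traceNorm hM') / 2 := by
  suffices h : traceNorm hM' ≤ traceNorm hM from ⟨h, by linarith⟩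
  set t := η' / η
  have ht₀ : 0 ≤ t := div_nonneg hη'0 (hη'0.trans hη'η)
  have ht₁ : t ≤ 1 := div_le_one_of_le₀ hη'η (hη'0.trans hη'η)
  have hη' : η' = t * η := by
    rcases (hη'0.trans hη'η).eq_or_lt with hη | hη
    · simp [← hη, le_antisymm (hη ▸ hη'η) hη'0]
    · exact (div_mul_cancel₀ η' hη.ne').symm
  -- `M(η') = t • M(η) + (1 - t) • M(0)` with `M(0) = (p₁ - p₀) • ρ₀`
  have hconvex := traceNorm_le_of_eq_smul_add_smul hM h₀.isHermitian hM'
    (a := t) (b := (1 - t) * (p₁ - p₀)) (by rw [hη']; module)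
  have htrace : (p₁ • (η • ρ + (1 - η) • ρ₀) - p₀ • ρ₀).trace.re = p₁ - p₀ := by
    simp [trace_sub, trace_add, trace_smul, hρtr, h₀tr]
    ring
  rw [h₀.traceNorm_eq, h₀tr, abs_mul, abs_of_nonneg ht₀, abs_of_nonneg (by linarith : 0 ≤ 1 - t),
    Complex.one_re, mul_one, ← htrace] at hconvex
  calc traceNorm hM'
      ≤ t * traceNorm hM + (1 - t) * |(p₁ • (η • ρ + (1 - η) • ρ₀) - p₀ • ρ₀).trace.re| := hconvex
    _ ≤ t * traceNorm hM + (1 - t) * traceNorm hM := by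
        gcongr
        exact abs_re_trace_le_traceNorm hM
    _ = traceNorm hM := by ring

/-- **Monotonicity of the minimal error in the reflectivity.** With
`ρ₁(η) := η·ρ + (1−η)·ρ₀`, if `0 ≤ η' ≤ η ≤ 1` then
`‖p₁ρ₁(η') − p₀ρ₀‖₁ ≤ ‖p₁ρ₁(η) − p₀ρ₀‖₁`; equivalently, the Helstrom error
`P_err(η) = (1 − ‖p₁ρ₁(η) − p₀ρ₀‖₁)/2` is non-increasing in `η`. -/
theorem minimal_error_monotone {d : ℕ}
    (ρ ρ₀ : Matrix (Fin d) (Fin d) ℂ)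
    (hρ : ρ.PosSemidef) (hρtr : ρ.trace = 1)
    (h₀ : ρ₀.PosSemidef) (h₀tr : ρ₀.trace = 1)
    (p₀ p₁ : ℝ) (hp₀ : 0 ≤ p₀) (hp₁ : 0 ≤ p₁) (hsum : p₀ + p₁ = 1)
    (η η' : ℝ) (hη'0 : 0 ≤ η') (hη'η : η' ≤ η) (hη1 : η ≤ 1)
    (hM' : (p₁ • (η' • ρ + (1 - η') • ρ₀) - p₀ • ρ₀).IsHermitian)
    (hM : (p₁ • (η • ρ + (1 - η) • ρ₀) - p₀ • ρ₀).IsHermitian) :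
    traceNorm hM' ≤ traceNorm hM ∧
      (1 - traceNorm hM) / 2 ≤ (1 - traceNorm hM') / 2 :=
  minimal_error_monotone_general ρ ρ₀ hρtr h₀ h₀tr p₀ p₁ η η' hη'0 hη'η hM' hM
end
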